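/- arXiv:1411.1178 — 5 statements merged into one kernel-verified Lean document; each statement's English description precedes it below -/
import Mathlib

section
/- Vanishing of the transport term against powers of the solution: let q ∈ [2,∞), let θ : ℝ² → ℝ be smooth with compact support, and let ψ : ℝ² → ℝ be twice continuously differentiable. Then ∫_{ℝ²} ( ∂₁θ(x)·∂₂ψ(x) − ∂₂θ(x)·∂₁ψ(x) ) |θ(x)|^{q−1} sgn(θ(x)) dx = 0. -/
open MeasureTheory Real Set

/-! Since `(|t| ^ q)' = q |t| ^ (q - 1) sgn t` for `q > 1`, the integrand is
`q⁻¹ (∂₁G ∂₂ψ - ∂₂G ∂₁ψ)` with `G = |θ| ^ q`, a `C¹` function of compact support.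
Integrating by parts, both `∫ ∂₁G ∂₂ψ` and `∫ ∂₂G ∂₁ψ` equal `-∫ G ∂₁∂₂ψ`, by the symmetry of
the second derivative of `ψ`. -/

theorem abs_rpow_sub_two_mul_self (q t : ℝ) :
    |t| ^ (q - 2) * t = |t| ^ (q - 1) * Real.sign t := by
  rcases lt_trichotomy t 0 with ht | rfl | ht
  · rw [Real.sign_of_neg ht, show q - 1 = q - 2 + 1 by ring,
      Real.rpow_add_one (abs_pos.2 ht.ne).ne', abs_of_neg ht]
    ring
  · simp
  · rw [Real.sign_of_pos ht, show q - 1 = q - 2 + 1 by ring,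
      Real.rpow_add_one (abs_pos.2 ht.ne').ne', abs_of_pos ht]
    ring

theorem HasFDerivAt.abs_rpow {E : Type*} [NormedAddCommGroup E] [NormedSpace ℝ E]
    {θ : E → ℝ} {θ' : E →L[ℝ] ℝ} {x : E} (hθ : HasFDerivAt θ θ' x) {q : ℝ} (hq : 1 < q) :
    HasFDerivAt (fun y => |θ y| ^ q) ((q * (|θ x| ^ (q - 1) * Real.sign (θ x))) • θ') x := by
  rw [← abs_rpow_sub_two_mul_self, ← mul_assoc]
  exact (hasDerivAt_abs_rpow (θ x) hq).comp_hasFDerivAt x hθ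

theorem fderiv_fderiv_apply_eq {E F : Type*} [NormedAddCommGroup E] [NormedSpace ℝ E]
    [NormedAddCommGroup F] [NormedSpace ℝ F] {g : E → F} {x : E}
    (hg : DifferentiableAt ℝ (fderiv ℝ g) x) (v w : E) :
    fderiv ℝ (fun y => fderiv ℝ g y w) x v = fderiv ℝ (fderiv ℝ g) x v w := by
  rw [fderiv_clm_apply hg (differentiableAt_const w)]
  simp

section IntegrationByParts

variable {E : Type*} [NormedAddCommGroup E] [NormedSpace ℝ E] [FiniteDimensional ℝ E]
  [MeasurableSpace E] [BorelSpace E] {μ : Measure E} [μ.IsAddHaarMeasure] {f g : E → ℝ}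

theorem integral_fderiv_mul_fderiv_eq_neg_integral_mul_fderiv_fderiv
    (hf : ContDiff ℝ 1 f) (hf_supp : HasCompactSupport f) (hg : ContDiff ℝ 2 g) (v w : E) :
    ∫ x, fderiv ℝ f x v * fderiv ℝ g x w ∂μ = -∫ x, f x * fderiv ℝ (fderiv ℝ g) x v w ∂μ := by
  have hg' : ContDiff ℝ 1 (fderiv ℝ g) := hg.fderiv_right le_rfl
  have hgw : ContDiff ℝ 1 (fun x => fderiv ℝ g x w) := hg'.clm_apply contDiff_const
  have hf'v : Continuous (fun x => fderiv ℝ f x v) :=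
    (hf.continuous_fderiv one_ne_zero).clm_apply continuous_const
  simp_rw [← fderiv_fderiv_apply_eq (hg'.differentiable one_ne_zero _)]
  rw [integral_mul_fderiv_eq_neg_fderiv_mul_of_integrable (f := f) (g := fun x => fderiv ℝ g x w),
    neg_neg]
  · exact (hf'v.mul hgw.continuous).integrable_of_hasCompactSupport
      (hf_supp.fderiv_apply ℝ v).mul_right
  · exact (hf.continuous.mul ((hgw.continuous_fderiv one_ne_zero).clm_apply continuous_const)
      ).integrable_of_hasCompactSupport hf_supp.mul_right
  · exact (hf.continuous.mul hgw.continuous).integrable_of_hasCompactSupport hf_supp.mul_right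
  · exact fun x _ => hf.differentiable one_ne_zero x
  · exact fun x _ => hgw.differentiable one_ne_zero x

theorem integral_fderiv_mul_fderiv_comm
    (hf : ContDiff ℝ 1 f) (hf_supp : HasCompactSupport f) (hg : ContDiff ℝ 2 g) (v w : E) :
    ∫ x, fderiv ℝ f x v * fderiv ℝ g x w ∂μ = ∫ x, fderiv ℝ f x w * fderiv ℝ g x v ∂μ := by
  simp_rw [integral_fderiv_mul_fderiv_eq_neg_integral_mul_fderiv_fderiv hf hf_supp hg,
    hg.contDiffAt.isSymmSndFDerivAt (by simp) v w]

theorem integral_fderiv_mul_fderiv_sub_fderiv_mul_fderiv_eq_zero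
    (hf : ContDiff ℝ 1 f) (hf_supp : HasCompactSupport f) (hg : ContDiff ℝ 2 g) (v w : E) :
    ∫ x, (fderiv ℝ f x v * fderiv ℝ g x w - fderiv ℝ f x w * fderiv ℝ g x v) ∂μ = 0 := by
  have hint (u u' : E) : Integrable (fun x => fderiv ℝ f x u * fderiv ℝ g x u') μ :=
    (((hf.continuous_fderiv one_ne_zero).clm_apply continuous_const).mul
      ((hg.continuous_fderiv two_ne_zero).clm_apply continuous_const)
      ).integrable_of_hasCompactSupport (hf_supp.fderiv_apply ℝ u).mul_right
  rw [integral_sub (hint v w) (hint w v), integral_fderiv_mul_fderiv_comm hf hf_supp hg, sub_self]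

end IntegrationByParts

/-- **Vanishing of the transport term against powers of the solution.**
For `q ∈ [2,∞)`, `θ : ℝ² → ℝ` smooth with compact support and `ψ : ℝ² → ℝ` of class `C²`,
`∫ (∂₁θ·∂₂ψ - ∂₂θ·∂₁ψ) |θ|^{q-1} sgn(θ) = 0`. -/
theorem transport_term_vanishes
    (q : ℝ) (hq : 2 ≤ q)
    (θ ψ : EuclideanSpace ℝ (Fin 2) → ℝ)
    (hθ : ContDiff ℝ (⊤ : ℕ∞) θ) (hθsupp : HasCompactSupport θ)
    (hψ : ContDiff ℝ 2 ψ) :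
    ∫ x : EuclideanSpace ℝ (Fin 2),
      (fderiv ℝ θ x (EuclideanSpace.single 0 1) * fderiv ℝ ψ x (EuclideanSpace.single 1 1)
        - fderiv ℝ θ x (EuclideanSpace.single 1 1) * fderiv ℝ ψ x (EuclideanSpace.single 0 1))
        * |θ x| ^ (q - 1) * Real.sign (θ x) = 0 := by
  have hq1 : 1 < q := by linarith
  have hq0 : q ≠ 0 := by positivity
  have hθ1 : ContDiff ℝ 1 θ := hθ.of_le (by exact_mod_cast le_top)
  set e₁ : EuclideanSpace ℝ (Fin 2) := EuclideanSpace.single 0 1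
  set e₂ : EuclideanSpace ℝ (Fin 2) := EuclideanSpace.single 1 1
  set G := fun x => |θ x| ^ q
  have hG : ContDiff ℝ 1 G := by simpa only [Real.norm_eq_abs] using hθ1.norm_rpow hq1
  have hG_supp : HasCompactSupport G := hθsupp.comp_left (g := fun t : ℝ => |t| ^ q) (by simp [hq0])
  have hG_fderiv (x v) :
      fderiv ℝ G x v = q * (|θ x| ^ (q - 1) * Real.sign (θ x)) * fderiv ℝ θ x v :=
    congrArg (· v) ((hθ1.differentiable one_ne_zero x).hasFDerivAt.abs_rpow hq1).fderiv
  calc _ = ∫ x, q⁻¹ * (fderiv ℝ G x e₁ * fderiv ℝ ψ x e₂ - fderiv ℝ G x e₂ * fderiv ℝ ψ x e₁) := by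
        congr 1 with x
        simp only [hG_fderiv]
        field_simp
    _ = 0 := by
        rw [integral_const_mul,
          integral_fderiv_mul_fderiv_sub_fderiv_mul_fderiv_eq_zero hG hG_supp hψ, mul_zero]
end

section
/- Passage from the L^q maximum principle to an L^∞ bound: let (Ω, μ) be a measure space, let θ, θ₀, f : Ω → ℝ be measurable, and let t ≥ 0. Assume θ₀ and f belong to L^q(μ) for every q ∈ [2,∞) and to L^∞(μ), and that for every q ∈ [2,∞): ∫_Ω |θ|^q dμ ≤ e^{(q−1)t} ∫_Ω |θ₀|^q dμ + ((e^{(q−1)t} − 1)/(q−1)) ∫_Ω |f|^q dμ. Then θ ∈ L^∞(μ) and ‖θ‖_{L^∞(μ)} ≤ ( ‖θ₀‖_{L^∞(μ)} + ‖f‖_{L^∞(μ)} ) e^t. -/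
/-!
Only the exponents `q = k + 2` are needed. Bounding `|θ₀|^(k+2) ≤ ‖θ₀‖_∞^k |θ₀|^2`, likewise for
`f`, and both coefficients by `e^((k+1)t)`, the hypothesis gives `∫ |θ|^(k+2) ≤ M^k C` with
`M = (‖θ₀‖_∞ + ‖f‖_∞) e^t` and `C = e^t (‖θ₀‖₂² + ‖f‖₂²) < ∞`. By Chebyshev,
`c^2 μ{c ≤ |θ|} ≤ (M/c)^k C` for every `c > M`, so `μ{c ≤ |θ|} = 0` as `k → ∞`.
-/

open MeasureTheory Real Filter
open scoped ENNReal Topology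

theorem sub_one_div_le_self {x s : ℝ} (hx : 0 ≤ x) (hs : 1 ≤ s) : (x - 1) / s ≤ x := by
  rw [div_le_iff₀ (by linarith)]
  nlinarith

theorem ofReal_abs_rpow_natCast (x : ℝ) (n : ℕ) : ENNReal.ofReal (|x| ^ (n : ℝ)) = ‖x‖ₑ ^ n := by
  rw [rpow_natCast, ENNReal.ofReal_pow (abs_nonneg x), enorm_eq_ofReal_abs]

namespace MeasureTheory

variable {Ω : Type*} [MeasurableSpace Ω] {μ : Measure Ω}

theorem lintegral_pow_add_le_of_ae_le {F : Ω → ℝ≥0∞} {A : ℝ≥0∞} (hA : A ≠ ⊤)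
    (hF : ∀ᵐ x ∂μ, F x ≤ A) (k m : ℕ) :
    ∫⁻ x, F x ^ (k + m) ∂μ ≤ A ^ k * ∫⁻ x, F x ^ m ∂μ := by
  rw [← lintegral_const_mul' _ _ (ENNReal.pow_ne_top hA)]
  refine lintegral_mono_ae (hF.mono fun x hx => ?_)
  rw [pow_add]
  gcongr

theorem lintegral_enorm_pow_add_le {E : Type*} [NormedAddCommGroup E] {g : Ω → E}
    (hg : eLpNorm g ⊤ μ ≠ ⊤) (k m : ℕ) :
    ∫⁻ x, ‖g x‖ₑ ^ (k + m) ∂μ ≤ eLpNorm g ⊤ μ ^ k * ∫⁻ x, ‖g x‖ₑ ^ m ∂μ := by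
  rw [eLpNorm_exponent_top] at hg ⊢
  exact lintegral_pow_add_le_of_ae_le hg ae_le_eLpNormEssSup k m

theorem MemLp.lintegral_enorm_sq_ne_top {E : Type*} [NormedAddCommGroup E] {g : Ω → E}
    (hg : MemLp g 2 μ) : ∫⁻ x, ‖g x‖ₑ ^ 2 ∂μ ≠ ⊤ := by
  have := lintegral_rpow_enorm_lt_top_of_eLpNorm_lt_top two_ne_zero ENNReal.ofNat_ne_top hg.2
  simpa using this.ne

theorem meas_ge_eq_zero_of_lintegral_pow_le {g : Ω → ℝ≥0∞} (hg : AEMeasurable g μ)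
    {M C c : ℝ≥0∞} (hC : C ≠ ⊤) (hMc : M < c) (hc : c ≠ ⊤)
    (h : ∀ k : ℕ, ∫⁻ x, g x ^ (k + 2) ∂μ ≤ M ^ k * C) : μ {x | c ≤ g x} = 0 := by
  have hc0 : c ≠ 0 := (zero_le.trans_lt hMc).ne'
  set r := M / c
  have hr : r < 1 := ENNReal.div_lt_of_lt_mul (by rwa [one_mul])
  have hcheb : ∀ k : ℕ, c ^ 2 * μ {x | c ≤ g x} ≤ r ^ k * C := fun k => by
    have hmarkov : c ^ (k + 2) * μ {x | c ≤ g x} ≤ ∫⁻ x, g x ^ (k + 2) ∂μ :=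
      (mul_le_mul_right (measure_mono fun x (hx : c ≤ g x) => pow_le_pow_left' hx _) _).trans
        (mul_meas_ge_le_lintegral₀ (hg.pow_const _) _)
    have hM : M = r * c := (ENNReal.div_mul_cancel hc0 hc).symm
    rw [pow_add, mul_assoc] at hmarkov
    have hk := h k
    rw [hM, mul_pow, mul_comm (r ^ k), mul_assoc] at hk
    exact (ENNReal.mul_le_mul_iff_right (pow_ne_zero _ hc0) (ENNReal.pow_ne_top hc)).1
      (hmarkov.trans hk)
  have hlim : Tendsto (fun k : ℕ => r ^ k * C) atTop (𝓝 0) := by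
    simpa using ENNReal.Tendsto.mul_const (ENNReal.tendsto_pow_atTop_nhds_zero_of_lt_one hr)
      (Or.inr hC)
  simpa [hc0] using ge_of_tendsto' hlim hcheb

theorem essSup_le_of_lintegral_pow_le {g : Ω → ℝ≥0∞} (hg : AEMeasurable g μ)
    {M C : ℝ≥0∞} (hC : C ≠ ⊤) (h : ∀ k : ℕ, ∫⁻ x, g x ^ (k + 2) ∂μ ≤ M ^ k * C) :
    essSup g μ ≤ M := by
  refine le_of_forall_gt_imp_ge_of_dense fun c hMc => ?_
  rcases eq_or_ne c ⊤ with rfl | hc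
  · exact le_top
  exact essSup_le_of_ae_le c (measure_mono_null (fun x (hx : ¬ g x ≤ c) => (not_le.1 hx).le)
    (meas_ge_eq_zero_of_lintegral_pow_le hg hC hMc hc h))

theorem lintegral_enorm_pow_le_of_Lq_bound {E : Type*} [NormedAddCommGroup E] {θ θ₀ f : Ω → E}
    (hθ₀ : eLpNorm θ₀ ⊤ μ ≠ ⊤) (hf : eLpNorm f ⊤ μ ≠ ⊤) {t : ℝ} {k : ℕ}
    (h : ∫⁻ x, ‖θ x‖ₑ ^ (k + 2) ∂μ ≤
      ENNReal.ofReal (exp ((k + 1) * t)) * ∫⁻ x, ‖θ₀ x‖ₑ ^ (k + 2) ∂μ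
        + ENNReal.ofReal ((exp ((k + 1) * t) - 1) / (k + 1)) * ∫⁻ x, ‖f x‖ₑ ^ (k + 2) ∂μ) :
    ∫⁻ x, ‖θ x‖ₑ ^ (k + 2) ∂μ ≤
      ((eLpNorm θ₀ ⊤ μ + eLpNorm f ⊤ μ) * ENNReal.ofReal (exp t)) ^ k *
        (ENNReal.ofReal (exp t) * (∫⁻ x, ‖θ₀ x‖ₑ ^ 2 ∂μ + ∫⁻ x, ‖f x‖ₑ ^ 2 ∂μ)) := by
  set e := ENNReal.ofReal (exp t)
  set A := eLpNorm θ₀ ⊤ μ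
  set B := eLpNorm f ⊤ μ
  have hE : ENNReal.ofReal (exp ((k + 1) * t)) = e ^ (k + 1) := by
    rw [← ENNReal.ofReal_pow (exp_nonneg _), ← exp_nat_mul]
    push_cast
    rfl
  have hcoef : ENNReal.ofReal ((exp ((k + 1) * t) - 1) / (k + 1)) ≤ e ^ (k + 1) :=
    hE ▸ ENNReal.ofReal_le_ofReal (sub_one_div_le_self (exp_nonneg _) (by simp))
  calc ∫⁻ x, ‖θ x‖ₑ ^ (k + 2) ∂μ
      ≤ e ^ (k + 1) * ∫⁻ x, ‖θ₀ x‖ₑ ^ (k + 2) ∂μ + e ^ (k + 1) * ∫⁻ x, ‖f x‖ₑ ^ (k + 2) ∂μ :=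
        h.trans (by rw [hE]; gcongr)
    _ ≤ e ^ (k + 1) * (A ^ k * ∫⁻ x, ‖θ₀ x‖ₑ ^ 2 ∂μ)
          + e ^ (k + 1) * (B ^ k * ∫⁻ x, ‖f x‖ₑ ^ 2 ∂μ) := by
        gcongr
        exacts [lintegral_enorm_pow_add_le hθ₀ k 2, lintegral_enorm_pow_add_le hf k 2]
    _ ≤ e ^ (k + 1) * ((A + B) ^ k * ∫⁻ x, ‖θ₀ x‖ₑ ^ 2 ∂μ)
          + e ^ (k + 1) * ((A + B) ^ k * ∫⁻ x, ‖f x‖ₑ ^ 2 ∂μ) := by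
        gcongr
        exacts [le_self_add, le_add_self]
    _ = ((A + B) * e) ^ k * (e * (∫⁻ x, ‖θ₀ x‖ₑ ^ 2 ∂μ + ∫⁻ x, ‖f x‖ₑ ^ 2 ∂μ)) := by
        rw [mul_pow]
        ring

end MeasureTheory

theorem Linfty_bound_from_Lq_maximum_principle_general
    {Ω : Type*} [MeasurableSpace Ω] (μ : Measure Ω)
    (θ θ₀ f : Ω → ℝ)
    (hθ : Measurable θ)
    (t : ℝ)
    (hθ₀q : ∀ q : ℝ, 2 ≤ q → MemLp θ₀ (ENNReal.ofReal q) μ)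
    (hθ₀top : MemLp θ₀ ⊤ μ)
    (hfq : ∀ q : ℝ, 2 ≤ q → MemLp f (ENNReal.ofReal q) μ)
    (hftop : MemLp f ⊤ μ)
    (hbound : ∀ q : ℝ, 2 ≤ q →
      ∫⁻ x, ENNReal.ofReal (|θ x| ^ q) ∂μ ≤
        ENNReal.ofReal (Real.exp ((q - 1) * t)) * ∫⁻ x, ENNReal.ofReal (|θ₀ x| ^ q) ∂μ
          + ENNReal.ofReal ((Real.exp ((q - 1) * t) - 1) / (q - 1)) *
              ∫⁻ x, ENNReal.ofReal (|f x| ^ q) ∂μ) :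
    MemLp θ ⊤ μ ∧
      eLpNorm θ ⊤ μ ≤ (eLpNorm θ₀ ⊤ μ + eLpNorm f ⊤ μ) * ENNReal.ofReal (Real.exp t) := by
  have hA := hθ₀top.eLpNorm_ne_top
  have hB := hftop.eLpNorm_ne_top
  have hmoments (k : ℕ) :=
    lintegral_enorm_pow_le_of_Lq_bound (θ := θ) hA hB (t := t) (k := k) <| by
      have hq : ((k + 2 : ℕ) : ℝ) - 1 = k + 1 := by push_cast; ring
      simpa only [ofReal_abs_rpow_natCast, hq] using hbound (k + 2 : ℕ) (by simp)
  have hL2 : ∫⁻ x, ‖θ₀ x‖ₑ ^ 2 ∂μ + ∫⁻ x, ‖f x‖ₑ ^ 2 ∂μ ≠ ⊤ := ENNReal.add_ne_top.2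
    ⟨(by simpa using hθ₀q 2 le_rfl : MemLp θ₀ 2 μ).lintegral_enorm_sq_ne_top,
      (by simpa using hfq 2 le_rfl : MemLp f 2 μ).lintegral_enorm_sq_ne_top⟩
  have hess : eLpNorm θ ⊤ μ ≤ (eLpNorm θ₀ ⊤ μ + eLpNorm f ⊤ μ) * ENNReal.ofReal (exp t) := by
    rw [eLpNorm_exponent_top]
    exact essSup_le_of_lintegral_pow_le hθ.enorm.aemeasurable
      (ENNReal.mul_ne_top ENNReal.ofReal_ne_top hL2) hmoments
  exact ⟨⟨hθ.aestronglyMeasurable, hess.trans_lt (by finiteness)⟩, hess⟩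

/-- **Passage from the `L^q` maximum principle to an `L^∞` bound.**
If `θ₀, f ∈ L^q(μ)` for all `q ∈ [2,∞)` and `θ₀, f ∈ L^∞(μ)`, and the family of `L^q`
bounds `∫|θ|^q ≤ e^{(q-1)t}∫|θ₀|^q + ((e^{(q-1)t}-1)/(q-1))∫|f|^q` holds for every
`q ∈ [2,∞)`, then `θ ∈ L^∞(μ)` with `‖θ‖_∞ ≤ (‖θ₀‖_∞ + ‖f‖_∞) e^t`. -/
theorem Linfty_bound_from_Lq_maximum_principle
    {Ω : Type*} [MeasurableSpace Ω] (μ : Measure Ω)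
    (θ θ₀ f : Ω → ℝ)
    (hθ : Measurable θ) (hθ₀ : Measurable θ₀) (hf : Measurable f)
    (t : ℝ) (ht : 0 ≤ t)
    (hθ₀q : ∀ q : ℝ, 2 ≤ q → MemLp θ₀ (ENNReal.ofReal q) μ)
    (hθ₀top : MemLp θ₀ ⊤ μ)
    (hfq : ∀ q : ℝ, 2 ≤ q → MemLp f (ENNReal.ofReal q) μ)
    (hftop : MemLp f ⊤ μ)
    (hbound : ∀ q : ℝ, 2 ≤ q →
      ∫⁻ x, ENNReal.ofReal (|θ x| ^ q) ∂μ ≤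
        ENNReal.ofReal (Real.exp ((q - 1) * t)) * ∫⁻ x, ENNReal.ofReal (|θ₀ x| ^ q) ∂μ
          + ENNReal.ofReal ((Real.exp ((q - 1) * t) - 1) / (q - 1)) *
              ∫⁻ x, ENNReal.ofReal (|f x| ^ q) ∂μ) :
    MemLp θ ⊤ μ ∧
      eLpNorm θ ⊤ μ ≤ (eLpNorm θ₀ ⊤ μ + eLpNorm f ⊤ μ) * ENNReal.ofReal (Real.exp t) :=
  Linfty_bound_from_Lq_maximum_principle_general μ θ θ₀ f hθ t hθ₀q hθ₀top hfq hftop hbound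
end

section
/- Convergence of negative fractional powers (Lemma 6.1 of the paper): in the resolvent setting, for every ψ ∈ D, setting φ := Aψ, the Bochner integrals defining A^{−β}φ converge for every β ∈ (0,1), and ‖A^{−α}φ − A^{−1/2}φ‖_X → 0 as α → 1/2⁺. More precisely, for every ε > 0 there is δ > 0 such that α ∈ (1/2, 1/2 + δ) implies ‖A^{−α}φ − A^{−1/2}φ‖_X ≤ ε (‖φ‖_X + ‖ψ‖_X). -/
open MeasureTheory Real Set Filter Topology

/-! The resolvent bounds `‖R l (A ψ)‖ ≤ (1 + M) ‖ψ‖` and `‖R l (A ψ)‖ ≤ M ‖A ψ‖ / l` control the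
integrand `l ^ (-β) • R l (A ψ)` near `0` and near `∞`, so it is integrable on `(0, ∞)` for
`0 < β < 1`; the resolvent identity makes `l ↦ R l φ` continuous, hence measurable. For `β` between
`β₁` and `β₂` the power `l ^ (-β)` is dominated by `l ^ (-β₁) + l ^ (-β₂)`, so dominated convergence
makes `β ↦ A^{-β} (A ψ)` continuous on `(0, 1)`, in particular at `1/2`. -/

theorem Real.rpow_le_rpow_add_rpow {l x y z : ℝ} (hl : 0 < l) (hxy : x ≤ y) (hyz : y ≤ z) :
    l ^ y ≤ l ^ x + l ^ z := by
  rcases le_total l 1 with h | h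
  · linarith [rpow_le_rpow_of_exponent_ge hl h hxy, rpow_nonneg hl.le z]
  · linarith [rpow_le_rpow_of_exponent_le h hyz, rpow_nonneg hl.le x]

section RpowSmul

variable {E : Type*} [NormedAddCommGroup E] [NormedSpace ℝ E] {f : ℝ → E}

theorem integrableOn_rpow_smul_Ioi {a b β : ℝ} (hf : ContinuousOn f (Ioi 0))
    (ha : ∀ l > 0, ‖f l‖ ≤ a) (hb : ∀ l > 0, ‖f l‖ ≤ b / l) (hβ₀ : 0 < β) (hβ₁ : β < 1) :
    IntegrableOn (fun l : ℝ => l ^ (-β) • f l) (Ioi 0) := by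
  have hmeas : AEStronglyMeasurable (fun l : ℝ => l ^ (-β) • f l) (volume.restrict (Ioi 0)) :=
    ((continuousOn_id.rpow_const fun l hl => Or.inl (ne_of_gt hl)).smul hf).aestronglyMeasurable
      measurableSet_Ioi
  rw [← Ioc_union_Ioi_eq_Ioi zero_le_one]
  refine IntegrableOn.union ?_ ?_
  · refine Integrable.mono'
      ((intervalIntegral.intervalIntegrable_rpow' (r := -β) (by linarith)).1.mul_const a)
      (hmeas.mono_set Ioc_subset_Ioi_self) ?_
    filter_upwards [ae_restrict_mem measurableSet_Ioc] with l hl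
    rw [norm_smul_of_nonneg (rpow_nonneg hl.1.le _)]
    exact mul_le_mul_of_nonneg_left (ha l hl.1) (rpow_nonneg hl.1.le _)
  · refine Integrable.mono'
      ((integrableOn_Ioi_rpow_of_lt (by linarith : -β - 1 < -1) one_pos).mul_const b)
      (hmeas.mono_set (Ioi_subset_Ioi zero_le_one)) ?_
    filter_upwards [ae_restrict_mem measurableSet_Ioi] with l hl
    have hl₀ : 0 < l := zero_lt_one.trans hl
    rw [norm_smul_of_nonneg (rpow_nonneg hl₀.le _), rpow_sub_one hl₀.ne']
    calc l ^ (-β) * ‖f l‖ ≤ l ^ (-β) * (b / l) :=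
          mul_le_mul_of_nonneg_left (hb l hl₀) (rpow_nonneg hl₀.le _)
      _ = l ^ (-β) / l * b := by ring

theorem continuousOn_integral_rpow_smul {a b : ℝ}
    (hint : ∀ β ∈ Ioo a b, IntegrableOn (fun l : ℝ => l ^ (-β) • f l) (Ioi 0)) :
    ContinuousOn (fun α : ℝ => ∫ l in Ioi (0:ℝ), l ^ (-α) • f l) (Ioo a b) := by
  intro α hα
  obtain ⟨β₁, hβ₁, hβ₁α⟩ := exists_between hα.1
  obtain ⟨β₂, hαβ₂, hβ₂⟩ := exists_between hα.2
  have hnhds : Ioo β₁ β₂ ∈ 𝓝 α := Ioo_mem_nhds hβ₁α hαβ₂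
  refine (continuousAt_of_dominated
    (bound := fun l => ‖l ^ (-β₂) • f l‖ + ‖l ^ (-β₁) • f l‖) ?_ ?_ ?_ ?_).continuousWithinAt
  · filter_upwards [hnhds] with β hβ
    exact (hint β ⟨hβ₁.trans hβ.1, hβ.2.trans hβ₂⟩).aestronglyMeasurable
  · filter_upwards [hnhds] with β hβ
    filter_upwards [ae_restrict_mem measurableSet_Ioi] with l (hl : 0 < l)
    simp only [norm_smul_of_nonneg (rpow_nonneg hl.le _), ← add_mul]
    exact mul_le_mul_of_nonneg_right
      (rpow_le_rpow_add_rpow hl (neg_le_neg hβ.2.le) (neg_le_neg hβ.1.le)) (norm_nonneg _)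
  · exact (hint β₂ ⟨hα.1.trans hαβ₂, hβ₂⟩).norm.add (hint β₁ ⟨hβ₁, hβ₁α.trans hα.2⟩).norm
  · filter_upwards [ae_restrict_mem measurableSet_Ioi] with l (hl : 0 < l)
    exact ((continuousAt_const_rpow hl.ne').comp continuousAt_neg).smul continuousAt_const

end RpowSmul

section Resolvent

variable {X : Type*} [NormedAddCommGroup X] [NormedSpace ℝ X]

/-- Balakrishnan's formula for `A^{-β} φ`, where `R l = (A + l)⁻¹`. -/
noncomputable def balakrishnanNegPow (R : ℝ → X →L[ℝ] X) (β : ℝ) (φ : X) : X :=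
  (Real.sin (π * β) / π) • ∫ l in Ioi (0:ℝ), l ^ (-β) • R l φ

theorem continuousOn_balakrishnanNegPow {R : ℝ → X →L[ℝ] X} {φ : X} {a b : ℝ}
    (hint : ∀ β ∈ Ioo a b, IntegrableOn (fun l : ℝ => l ^ (-β) • R l φ) (Ioi 0)) :
    ContinuousOn (fun β => balakrishnanNegPow R β φ) (Ioo a b) :=
  ((continuous_sin.comp (continuous_const.mul continuous_id)).div_const π).continuousOn.smul
    (continuousOn_integral_rpow_smul hint)

structure IsResolvent (D : Submodule ℝ X) (A : X → X) (R : ℝ → X →L[ℝ] X) (M : ℝ) : Prop where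
  mem : ∀ l : ℝ, 0 < l → ∀ φ : X, R l φ ∈ D
  right_inv : ∀ l : ℝ, 0 < l → ∀ φ : X, A (R l φ) + l • R l φ = φ
  left_inv : ∀ l : ℝ, 0 < l → ∀ ψ ∈ D, R l (A ψ + l • ψ) = ψ
  norm_smul_le : ∀ l : ℝ, 0 < l → ∀ φ : X, ‖l • R l φ‖ ≤ M * ‖φ‖

namespace IsResolvent

variable {D : Submodule ℝ X} {A : X → X} {R : ℝ → X →L[ℝ] X} {M l m : ℝ}

theorem norm_le (hR : IsResolvent D A R M) (hl : 0 < l) (φ : X) : ‖R l φ‖ ≤ M * ‖φ‖ / l := by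
  rw [le_div_iff₀ hl, mul_comm, ← norm_smul_of_nonneg hl.le]
  exact hR.norm_smul_le l hl φ

theorem apply_A (hR : IsResolvent D A R M) (hl : 0 < l) {ψ : X} (hψ : ψ ∈ D) :
    R l (A ψ) = ψ - l • R l ψ := by
  have h := hR.left_inv l hl ψ hψ
  rw [map_add, map_smul] at h
  exact eq_sub_of_add_eq h

theorem norm_apply_A_le (hR : IsResolvent D A R M) (hl : 0 < l) {ψ : X} (hψ : ψ ∈ D) :
    ‖R l (A ψ)‖ ≤ (1 + M) * ‖ψ‖ := by
  rw [hR.apply_A hl hψ]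
  calc ‖ψ - l • R l ψ‖ ≤ ‖ψ‖ + ‖l • R l ψ‖ := norm_sub_le _ _
    _ ≤ ‖ψ‖ + M * ‖ψ‖ := add_le_add le_rfl (hR.norm_smul_le l hl ψ)
    _ = (1 + M) * ‖ψ‖ := by ring

theorem resolvent_identity (hR : IsResolvent D A R M) (hl : 0 < l) (hm : 0 < m) (φ : X) :
    R l φ - R m φ = (m - l) • R l (R m φ) := by
  have h := hR.left_inv l hl _ (hR.mem m hm φ)
  have hA : A (R m φ) + l • R m φ = φ + (l - m) • R m φ := by
    rw [eq_sub_of_add_eq (hR.right_inv m hm φ)]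
    module
  rw [hA, map_add, map_smul] at h
  nth_rw 1 [← h]
  module

theorem continuousOn (hR : IsResolvent D A R M) (φ : X) :
    ContinuousOn (fun l => R l φ) (Ioi 0) := by
  intro m (hm : 0 < m)
  have hbound : ∀ l ∈ Ioi (0:ℝ), ‖R l φ - R m φ‖ ≤ |m - l| * (M * ‖R m φ‖ / l) := by
    intro l (hl : 0 < l)
    rw [hR.resolvent_identity hl hm, norm_smul, Real.norm_eq_abs]
    exact mul_le_mul_of_nonneg_left (hR.norm_le hl _) (abs_nonneg _)
  have hlim : ContinuousAt (fun l => |m - l| * (M * ‖R m φ‖ / l)) m :=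
    (continuousAt_const.sub continuousAt_id).abs.mul (continuousAt_const.div continuousAt_id hm.ne')
  refine tendsto_iff_norm_sub_tendsto_zero.mpr
    (squeeze_zero' (Eventually.of_forall fun _ => norm_nonneg _)
      (eventually_nhdsWithin_of_forall hbound) ?_)
  simpa using hlim.tendsto.mono_left nhdsWithin_le_nhds

end IsResolvent

end Resolvent

theorem negative_fractional_powers_converge_general
    {X : Type*} [NormedAddCommGroup X] [NormedSpace ℝ X]
    (D : Submodule ℝ X) (A : X → X)
    (M : ℝ)
    (R : ℝ → X →L[ℝ] X)
    (hRmem : ∀ l : ℝ, 0 < l → ∀ φ : X, R l φ ∈ D)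
    (hAR : ∀ l : ℝ, 0 < l → ∀ φ : X, A (R l φ) + l • R l φ = φ)
    (hRA : ∀ l : ℝ, 0 < l → ∀ ψ ∈ D, R l (A ψ + l • ψ) = ψ)
    (hRnorm : ∀ l : ℝ, 0 < l → ∀ φ : X, ‖l • R l φ‖ ≤ M * ‖φ‖)
    (ψ : X) (hψ : ψ ∈ D) :
    (∀ β ∈ Set.Ioo (0:ℝ) 1,
        IntegrableOn (fun l : ℝ => l ^ (-β) • R l (A ψ)) (Set.Ioi 0)) ∧
    ∀ ε > (0:ℝ), ∃ δ > (0:ℝ), ∀ α : ℝ, 1/2 < α → α < 1/2 + δ →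
      ‖(Real.sin (π * α) / π) • (∫ l in Set.Ioi (0:ℝ), l ^ (-α) • R l (A ψ))
        - (Real.sin (π * (1/2)) / π) • (∫ l in Set.Ioi (0:ℝ), l ^ (-(1/2 : ℝ)) • R l (A ψ))‖
        ≤ ε * (‖A ψ‖ + ‖ψ‖) := by
  have hR : IsResolvent D A R M := ⟨hRmem, hAR, hRA, hRnorm⟩
  have hint : ∀ β ∈ Ioo (0:ℝ) 1, IntegrableOn (fun l : ℝ => l ^ (-β) • R l (A ψ)) (Ioi 0) :=
    fun β hβ => integrableOn_rpow_smul_Ioi (hR.continuousOn _)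
      (fun l hl => hR.norm_apply_A_le hl hψ) (fun l hl => hR.norm_le hl _) hβ.1 hβ.2
  refine ⟨hint, fun ε hε => ?_⟩
  obtain hS | hS := (by positivity : (0:ℝ) ≤ ‖A ψ‖ + ‖ψ‖).eq_or_lt
  · have hφ : A ψ = 0 := norm_eq_zero.mp (by linarith [norm_nonneg (A ψ), norm_nonneg ψ])
    exact ⟨1, one_pos, fun α _ _ => by simpa [hφ] using mul_nonneg hε.le (norm_nonneg ψ)⟩
  have hcont : ContinuousAt (fun β => balakrishnanNegPow R β (A ψ)) (1/2) :=
    (continuousOn_balakrishnanNegPow hint).continuousAt (Ioo_mem_nhds (by norm_num) (by norm_num))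
  obtain ⟨δ, hδ, hball⟩ := Metric.continuousAt_iff.mp hcont _ (mul_pos hε hS)
  refine ⟨δ, hδ, fun α hα₁ hα₂ => ?_⟩
  have hdist : dist α (1/2) < δ := by
    rw [Real.dist_eq, abs_of_pos (by linarith)]
    linarith
  have hclose := (hball hdist).le
  rwa [dist_eq_norm] at hclose

/-- **Convergence of negative fractional powers (Lemma 6.1).**
Resolvent setting: `X` Banach, `D ⊆ X` a linear subspace, `A` linear on `D`, and for
every `λ > 0` the operator `A + λI : D → X` is bijective with bounded inverse
`R(λ)` satisfying `‖λR(λ)‖ ≤ M`. Then for `ψ ∈ D` and `φ := Aψ` the Bochner integrals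
defining the Balakrishnan powers `A^{-β}φ = (sin(πβ)/π)∫₀^∞ λ^{-β} R(λ)φ dλ` converge
for all `β ∈ (0,1)`, and `A^{-α}φ → A^{-1/2}φ` as `α → 1/2⁺`, quantitatively:
for every `ε > 0` there is `δ > 0` such that `1/2 < α < 1/2 + δ` implies
`‖A^{-α}φ - A^{-1/2}φ‖ ≤ ε(‖φ‖ + ‖ψ‖)`. -/
theorem negative_fractional_powers_converge
    {X : Type*} [NormedAddCommGroup X] [NormedSpace ℝ X] [CompleteSpace X]
    (D : Submodule ℝ X) (A : X → X)
    (hAlin : ∀ x ∈ D, ∀ y ∈ D, ∀ a b : ℝ, A (a • x + b • y) = a • A x + b • A y)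
    (M : ℝ) (hM : 1 ≤ M)
    (R : ℝ → X →L[ℝ] X)
    (hRmem : ∀ l : ℝ, 0 < l → ∀ φ : X, R l φ ∈ D)
    (hAR : ∀ l : ℝ, 0 < l → ∀ φ : X, A (R l φ) + l • R l φ = φ)
    (hRA : ∀ l : ℝ, 0 < l → ∀ ψ ∈ D, R l (A ψ + l • ψ) = ψ)
    (hRnorm : ∀ l : ℝ, 0 < l → ∀ φ : X, ‖l • R l φ‖ ≤ M * ‖φ‖)
    (ψ : X) (hψ : ψ ∈ D) :
    (∀ β ∈ Set.Ioo (0:ℝ) 1,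
        IntegrableOn (fun l : ℝ => l ^ (-β) • R l (A ψ)) (Set.Ioi 0)) ∧
    ∀ ε > (0:ℝ), ∃ δ > (0:ℝ), ∀ α : ℝ, 1/2 < α → α < 1/2 + δ →
      ‖(Real.sin (π * α) / π) • (∫ l in Set.Ioi (0:ℝ), l ^ (-α) • R l (A ψ))
        - (Real.sin (π * (1/2)) / π) • (∫ l in Set.Ioi (0:ℝ), l ^ (-(1/2 : ℝ)) • R l (A ψ))‖
        ≤ ε * (‖A ψ‖ + ‖ψ‖) :=
  negative_fractional_powers_converge_general D A M R hRmem hAR hRA hRnorm ψ hψ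
end

section
/- Convergence of the resolvents of fractional powers (Lemma 6.2 of the paper, abstract form): in the resolvent setting, for α ∈ [1/2, 3/4] define B_α φ := (sin(απ)/π) ∫₀^∞ [ λ^α / (λ^{2α} + 2 λ^α cos(πα) + 1) ] R(λ)φ dλ (this Bochner integral converges absolutely for every φ ∈ X; B_α is the integral representation of (I + A^α)^{−1}). Then for every ψ ∈ D, setting φ := Aψ, one has ‖B_α φ − B_{1/2} φ‖_X → 0 as α → 1/2⁺; more precisely, for every ε > 0 there is δ > 0 such that α ∈ (1/2, 1/2 + δ) implies ‖B_α φ − B_{1/2} φ‖_X ≤ ε (‖φ‖_X + ‖ψ‖_X). -/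
/-! The kernel `k_α(λ) = λ^α / (λ^{2α} + 2λ^α cos(πα) + 1)` satisfies
`0 ≤ k_α(λ) ≤ 2 min(λ^α, λ^{-α})` as soon as `cos²(πα) ≤ 1/2`. Together with `‖R(λ)x‖ ≤ M‖x‖/λ`
this dominates the integrand of `B_α x` by a multiple of `min(λ^{α-1}, λ^{-α-1})`, which is
integrable on `(0, ∞)`. For `x = Aψ` the identity `R(λ)Aψ = ψ - λR(λ)ψ` also bounds `R(λ)Aψ`
uniformly in `λ`, so for `α ≥ 1/2` the integrands are all dominated by a multiple of
`min(λ^{1/2}, λ^{-3/2})` and dominated convergence gives `B_α Aψ → B_{1/2} Aψ`. Measurability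
comes from the continuity of `λ ↦ R(λ)x`, a consequence of the resolvent identity. -/

open MeasureTheory Real Set Filter Topology

lemma min_mul_min_le_min_mul_mul_of_nonneg {𝕜 : Type*} [Semiring 𝕜] [LinearOrder 𝕜]
    [IsOrderedRing 𝕜] {a b c d : 𝕜} (ha : 0 ≤ a) (hb : 0 ≤ b) (hc : 0 ≤ c) (hd : 0 ≤ d) :
    min a b * min c d ≤ min (a * c) (b * d) :=
  le_min (mul_le_mul (min_le_left _ _) (min_le_left _ _) (le_min hc hd) ha)
    (mul_le_mul (min_le_right _ _) (min_le_right _ _) (le_min hc hd) hb)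

lemma cos_sq_pi_mul_le_half {α : ℝ} (h₁ : 1 / 4 ≤ α) (h₂ : α ≤ 3 / 4) :
    cos (π * α) ^ 2 ≤ 1 / 2 := by
  have : cos (2 * (π * α)) ≤ 0 :=
    cos_nonpos_of_pi_div_two_le_of_le (by nlinarith [pi_pos]) (by nlinarith [pi_pos])
  rw [cos_sq]
  linarith

lemma half_le_sq_add_two_mul_add_one {t c : ℝ} (hc : c ^ 2 ≤ 1 / 2) :
    1 / 2 ≤ t ^ 2 + 2 * t * c + 1 := by
  nlinarith [sq_nonneg (t + c)]

lemma div_sq_add_two_mul_add_one_le {t c : ℝ} (ht : 0 < t) (hc : c ^ 2 ≤ 1 / 2) :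
    t / (t ^ 2 + 2 * t * c + 1) ≤ 2 * min t t⁻¹ := by
  have hpos : 0 < t ^ 2 + 2 * t * c + 1 := by
    linarith [half_le_sq_add_two_mul_add_one (t := t) hc]
  rw [mul_min_of_nonneg _ _ zero_le_two, le_min_iff, div_le_iff₀ hpos, div_le_iff₀ hpos]
  constructor
  · nlinarith [sq_nonneg (t + c)]
  · rw [← div_eq_mul_inv, div_mul_eq_mul_div, le_div_iff₀ ht]
    nlinarith [sq_nonneg (t + 2 * c)]

lemma min_rpow_rpow_neg_le_of_le {l α β : ℝ} (hl : 0 < l) (hβ : 0 ≤ β) (hβα : β ≤ α) :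
    min (l ^ α) (l ^ (-α)) ≤ min (l ^ β) (l ^ (-β)) := by
  rcases le_total l 1 with h | h
  · exact le_min ((min_le_left _ _).trans (rpow_le_rpow_of_exponent_ge hl h hβα))
      ((min_le_left _ _).trans (rpow_le_rpow_of_exponent_ge hl h (by linarith)))
  · exact le_min ((min_le_right _ _).trans (rpow_le_rpow_of_exponent_le h (by linarith)))
      ((min_le_right _ _).trans (rpow_le_rpow_of_exponent_le h (by linarith)))

lemma integrableOn_Ioi_min_rpow {a b : ℝ} (ha : -1 < a) (hb : b < -1) :
    IntegrableOn (fun l : ℝ => min (l ^ a) (l ^ b)) (Ioi 0) := by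
  have hmeas : Measurable fun l : ℝ => min (l ^ a) (l ^ b) := by fun_prop
  have hnorm : ∀ l : ℝ, 0 < l → ‖min (l ^ a) (l ^ b)‖ = min (l ^ a) (l ^ b) := fun l hl =>
    norm_of_nonneg (le_min (rpow_nonneg hl.le a) (rpow_nonneg hl.le b))
  rw [← Ioc_union_Ioi_eq_Ioi zero_le_one]
  refine IntegrableOn.union ?_ ?_
  · refine (intervalIntegral.intervalIntegrable_rpow' ha).1.mono' hmeas.aestronglyMeasurable ?_
    filter_upwards [ae_restrict_mem measurableSet_Ioc] with l hl
    exact (hnorm l hl.1).trans_le (min_le_left _ _)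
  · refine (integrableOn_Ioi_rpow_of_lt hb one_pos).mono' hmeas.aestronglyMeasurable ?_
    filter_upwards [ae_restrict_mem measurableSet_Ioi] with l (hl : 1 < l)
    exact (hnorm l (one_pos.trans hl)).trans_le (min_le_right _ _)

noncomputable def fractionalKernel (α l : ℝ) : ℝ :=
  l ^ α / (l ^ (2 * α) + 2 * l ^ α * cos (π * α) + 1)

section FractionalKernel

variable {α l : ℝ}

lemma rpow_two_mul_eq_sq (hl : 0 < l) : l ^ (2 * α) = (l ^ α) ^ 2 := by
  rw [mul_comm 2 α, rpow_mul hl.le, rpow_two]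

lemma fractionalKernel_denom_pos (hl : 0 < l) (h₁ : 1 / 4 ≤ α) (h₂ : α ≤ 3 / 4) :
    0 < l ^ (2 * α) + 2 * l ^ α * cos (π * α) + 1 := by
  rw [rpow_two_mul_eq_sq hl]
  linarith [half_le_sq_add_two_mul_add_one (t := l ^ α) (cos_sq_pi_mul_le_half h₁ h₂)]

lemma fractionalKernel_nonneg (hl : 0 < l) (h₁ : 1 / 4 ≤ α) (h₂ : α ≤ 3 / 4) :
    0 ≤ fractionalKernel α l :=
  div_nonneg (rpow_nonneg hl.le α) (fractionalKernel_denom_pos hl h₁ h₂).le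

lemma fractionalKernel_le (hl : 0 < l) (h₁ : 1 / 4 ≤ α) (h₂ : α ≤ 3 / 4) :
    fractionalKernel α l ≤ 2 * min (l ^ α) (l ^ (-α)) := by
  rw [fractionalKernel, rpow_two_mul_eq_sq hl, rpow_neg hl.le]
  exact div_sq_add_two_mul_add_one_le (rpow_pos_of_pos hl α) (cos_sq_pi_mul_le_half h₁ h₂)

lemma continuousOn_fractionalKernel (h₁ : 1 / 4 ≤ α) (h₂ : α ≤ 3 / 4) :
    ContinuousOn (fractionalKernel α) (Ioi 0) := by
  intro l (hl : 0 < l)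
  have := fractionalKernel_denom_pos hl h₁ h₂
  unfold fractionalKernel
  fun_prop (disch := first | exact this.ne' | exact Or.inl hl.ne')

lemma continuousAt_fractionalKernel_exponent (hl : 0 < l) (h₁ : 1 / 4 ≤ α)
    (h₂ : α ≤ 3 / 4) :
    ContinuousAt (fun β => fractionalKernel β l) α := by
  have := fractionalKernel_denom_pos hl h₁ h₂
  unfold fractionalKernel
  fun_prop (disch := first | exact this.ne' | exact hl.ne')

end FractionalKernel

section Resolvent

variable {X : Type*} [NormedAddCommGroup X] [NormedSpace ℝ X] {D : Submodule ℝ X}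
  {A : X → X} {M : ℝ} {R : ℝ → X →L[ℝ] X} {l : ℝ}

lemma norm_resolvent_le (hRnorm : ∀ l : ℝ, 0 < l → ∀ φ : X, ‖l • R l φ‖ ≤ M * ‖φ‖)
    (hl : 0 < l) (x : X) : ‖R l x‖ ≤ M * ‖x‖ / l := by
  rw [le_div_iff₀ hl]
  calc ‖R l x‖ * l = ‖l • R l x‖ := by rw [norm_smul, norm_of_nonneg hl.le, mul_comm]
    _ ≤ M * ‖x‖ := hRnorm l hl x

lemma resolvent_sub_resolvent (hRmem : ∀ l : ℝ, 0 < l → ∀ φ : X, R l φ ∈ D)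
    (hAR : ∀ l : ℝ, 0 < l → ∀ φ : X, A (R l φ) + l • R l φ = φ)
    (hRA : ∀ l : ℝ, 0 < l → ∀ ψ ∈ D, R l (A ψ + l • ψ) = ψ) {μ : ℝ} (hl : 0 < l)
    (hμ : 0 < μ) (x : X) : R μ x - R l x = (l - μ) • R μ (R l x) := by
  have h := hRA μ hμ (R l x) (hRmem l hl x)
  rw [show A (R l x) + μ • R l x = x + (μ - l) • R l x by
    linear_combination (norm := module) hAR l hl x, map_add, map_smul] at h
  linear_combination (norm := module) h

lemma continuousOn_resolvent (hRmem : ∀ l : ℝ, 0 < l → ∀ φ : X, R l φ ∈ D)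
    (hAR : ∀ l : ℝ, 0 < l → ∀ φ : X, A (R l φ) + l • R l φ = φ)
    (hRA : ∀ l : ℝ, 0 < l → ∀ ψ ∈ D, R l (A ψ + l • ψ) = ψ)
    (hRnorm : ∀ l : ℝ, 0 < l → ∀ φ : X, ‖l • R l φ‖ ≤ M * ‖φ‖) (x : X) :
    ContinuousOn (fun l => R l x) (Ioi 0) := by
  refine isOpen_Ioi.continuousOn_iff.2 fun l (hl : 0 < l) => ?_
  rw [ContinuousAt, tendsto_iff_norm_sub_tendsto_zero]
  have hbound : ∀ᶠ μ in 𝓝 l, ‖R μ x - R l x‖ ≤ |l - μ| * (M * ‖R l x‖ / μ) := by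
    filter_upwards [Ioi_mem_nhds hl] with μ (hμ : 0 < μ)
    rw [resolvent_sub_resolvent hRmem hAR hRA hl hμ, norm_smul, Real.norm_eq_abs]
    gcongr
    exact norm_resolvent_le hRnorm hμ _
  have hcont : ContinuousAt (fun μ => |l - μ| * (M * ‖R l x‖ / μ)) l := by
    fun_prop (disch := exact hl.ne')
  refine squeeze_zero' (Eventually.of_forall fun _ => norm_nonneg _) hbound ?_
  simpa using hcont.tendsto

lemma norm_resolvent_apply_le (hRA : ∀ l : ℝ, 0 < l → ∀ ψ ∈ D, R l (A ψ + l • ψ) = ψ)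
    (hRnorm : ∀ l : ℝ, 0 < l → ∀ φ : X, ‖l • R l φ‖ ≤ M * ‖φ‖) (hl : 0 < l) {ψ : X}
    (hψ : ψ ∈ D) : ‖R l (A ψ)‖ ≤ (1 + M) * ‖ψ‖ := by
  have h : R l (A ψ) = ψ - l • R l ψ := by
    rw [eq_sub_iff_add_eq, ← map_smul, ← map_add, hRA l hl ψ hψ]
  calc ‖R l (A ψ)‖ ≤ ‖ψ‖ + ‖l • R l ψ‖ := h ▸ norm_sub_le _ _
    _ ≤ (1 + M) * ‖ψ‖ := by linarith [hRnorm l hl ψ]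

lemma norm_resolvent_apply_le_mul_min
    (hRA : ∀ l : ℝ, 0 < l → ∀ ψ ∈ D, R l (A ψ + l • ψ) = ψ)
    (hRnorm : ∀ l : ℝ, 0 < l → ∀ φ : X, ‖l • R l φ‖ ≤ M * ‖φ‖) (hM : 0 ≤ M) (hl : 0 < l)
    {ψ : X} (hψ : ψ ∈ D) :
    ‖R l (A ψ)‖ ≤ (1 + M) * (‖A ψ‖ + ‖ψ‖) * min 1 l⁻¹ := by
  have hAψ := norm_nonneg (A ψ)
  have hψ' := norm_nonneg ψ
  rw [mul_min_of_nonneg _ _ (by positivity), mul_one]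
  refine le_min ((norm_resolvent_apply_le hRA hRnorm hl hψ).trans (by gcongr; linarith)) ?_
  refine (norm_resolvent_le hRnorm hl _).trans ?_
  rw [div_eq_mul_inv]
  gcongr <;> linarith

end Resolvent

section FractionalResolvent

variable {X : Type*} [NormedAddCommGroup X] [NormedSpace ℝ X] {D : Submodule ℝ X}
  {A : X → X} {M : ℝ} {R : ℝ → X →L[ℝ] X} {α : ℝ}

lemma integrableOn_fractionalKernel_smul_resolvent
    (hRmem : ∀ l : ℝ, 0 < l → ∀ φ : X, R l φ ∈ D)
    (hAR : ∀ l : ℝ, 0 < l → ∀ φ : X, A (R l φ) + l • R l φ = φ)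
    (hRA : ∀ l : ℝ, 0 < l → ∀ ψ ∈ D, R l (A ψ + l • ψ) = ψ)
    (hRnorm : ∀ l : ℝ, 0 < l → ∀ φ : X, ‖l • R l φ‖ ≤ M * ‖φ‖)
    (h₁ : 1 / 4 ≤ α) (h₂ : α ≤ 3 / 4) (x : X) :
    IntegrableOn (fun l => fractionalKernel α l • R l x) (Ioi 0) := by
  have hmeas := ((continuousOn_fractionalKernel h₁ h₂).smul
    (continuousOn_resolvent hRmem hAR hRA hRnorm x)).aestronglyMeasurable (μ := volume)
      measurableSet_Ioi
  refine (((integrableOn_Ioi_min_rpow (a := α - 1) (b := -α - 1) (by linarith)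
    (by linarith)).const_mul (2 * M * ‖x‖))).mono' hmeas ?_
  filter_upwards [ae_restrict_mem measurableSet_Ioi] with l (hl : 0 < l)
  calc ‖fractionalKernel α l • R l x‖ = fractionalKernel α l * ‖R l x‖ := by
        rw [norm_smul, norm_of_nonneg (fractionalKernel_nonneg hl h₁ h₂)]
    _ ≤ 2 * min (l ^ α) (l ^ (-α)) * (M * ‖x‖ / l) :=
        mul_le_mul (fractionalKernel_le hl h₁ h₂) (norm_resolvent_le hRnorm hl x)
          (norm_nonneg _) (by positivity)
    _ = 2 * M * ‖x‖ * min (l ^ (α - 1)) (l ^ (-α - 1)) := by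
        rw [rpow_sub_one hl.ne', rpow_sub_one hl.ne', min_div_div_right hl.le]
        ring

lemma norm_fractionalKernel_smul_resolvent_apply_le
    (hRA : ∀ l : ℝ, 0 < l → ∀ ψ ∈ D, R l (A ψ + l • ψ) = ψ)
    (hRnorm : ∀ l : ℝ, 0 < l → ∀ φ : X, ‖l • R l φ‖ ≤ M * ‖φ‖) (hM : 0 ≤ M)
    (h₁ : 1 / 2 ≤ α) (h₂ : α ≤ 3 / 4) {l : ℝ} (hl : 0 < l) {ψ : X} (hψ : ψ ∈ D) :
    ‖fractionalKernel α l • R l (A ψ)‖ ≤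
      2 * (1 + M) * (‖A ψ‖ + ‖ψ‖) * min (l ^ (1 / 2 : ℝ)) (l ^ (-3 / 2 : ℝ)) := by
  have hkernel : fractionalKernel α l ≤ 2 * min (l ^ (1 / 2 : ℝ)) (l ^ (-(1 / 2) : ℝ)) :=
    (fractionalKernel_le hl (by linarith) h₂).trans
      (mul_le_mul_of_nonneg_left (min_rpow_rpow_neg_le_of_le hl (by norm_num) h₁) zero_le_two)
  calc ‖fractionalKernel α l • R l (A ψ)‖ = fractionalKernel α l * ‖R l (A ψ)‖ := by
        rw [norm_smul, norm_of_nonneg (fractionalKernel_nonneg hl (by linarith) h₂)]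
    _ ≤ 2 * min (l ^ (1 / 2 : ℝ)) (l ^ (-(1 / 2) : ℝ)) *
          ((1 + M) * (‖A ψ‖ + ‖ψ‖) * min 1 l⁻¹) :=
        mul_le_mul hkernel (norm_resolvent_apply_le_mul_min hRA hRnorm hM hl hψ)
          (norm_nonneg _) (by positivity)
    _ = 2 * (1 + M) * (‖A ψ‖ + ‖ψ‖) *
          (min (l ^ (1 / 2 : ℝ)) (l ^ (-(1 / 2) : ℝ)) * min 1 l⁻¹) := by
        ring
    _ ≤ 2 * (1 + M) * (‖A ψ‖ + ‖ψ‖) *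
          min (l ^ (1 / 2 : ℝ) * 1) (l ^ (-(1 / 2) : ℝ) * l⁻¹) := by
        gcongr
        exact min_mul_min_le_min_mul_mul_of_nonneg (by positivity) (by positivity)
          zero_le_one (by positivity)
    _ = 2 * (1 + M) * (‖A ψ‖ + ‖ψ‖) * min (l ^ (1 / 2 : ℝ)) (l ^ (-3 / 2 : ℝ)) := by
        rw [mul_one, ← div_eq_mul_inv, ← rpow_sub_one hl.ne']
        norm_num

lemma tendsto_integral_fractionalKernel_smul_resolvent_apply
    (hRmem : ∀ l : ℝ, 0 < l → ∀ φ : X, R l φ ∈ D)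
    (hAR : ∀ l : ℝ, 0 < l → ∀ φ : X, A (R l φ) + l • R l φ = φ)
    (hRA : ∀ l : ℝ, 0 < l → ∀ ψ ∈ D, R l (A ψ + l • ψ) = ψ)
    (hRnorm : ∀ l : ℝ, 0 < l → ∀ φ : X, ‖l • R l φ‖ ≤ M * ‖φ‖) (hM : 0 ≤ M) {ψ : X}
    (hψ : ψ ∈ D) :
    Tendsto (fun α => ∫ l in Ioi 0, fractionalKernel α l • R l (A ψ)) (𝓝[>] (1 / 2))
      (𝓝 (∫ l in Ioi 0, fractionalKernel (1 / 2) l • R l (A ψ))) := by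
  have hnear : Ioc (1 / 2 : ℝ) (3 / 4) ∈ 𝓝[>] (1 / 2 : ℝ) := Ioc_mem_nhdsGT (by norm_num)
  refine tendsto_integral_filter_of_dominated_convergence _ ?_ ?_
    ((integrableOn_Ioi_min_rpow (a := 1 / 2) (b := -3 / 2) (by norm_num)
      (by norm_num)).const_mul (2 * (1 + M) * (‖A ψ‖ + ‖ψ‖))) ?_
  · filter_upwards [hnear] with α hα
    exact (integrableOn_fractionalKernel_smul_resolvent hRmem hAR hRA hRnorm
      (by linarith [hα.1]) hα.2 _).aestronglyMeasurable
  · filter_upwards [hnear] with α hα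
    filter_upwards [ae_restrict_mem measurableSet_Ioi] with l (hl : 0 < l)
    exact norm_fractionalKernel_smul_resolvent_apply_le hRA hRnorm hM hα.1.le hα.2 hl hψ
  · filter_upwards [ae_restrict_mem measurableSet_Ioi] with l (hl : 0 < l)
    exact ((continuousAt_fractionalKernel_exponent hl (by norm_num)
      (by norm_num)).tendsto.mono_left nhdsWithin_le_nhds).smul_const _

/-- `B_α φ`, the integral representation of `(I + A^α)⁻¹ φ`. -/
noncomputable def fractionalResolvent (R : ℝ → X →L[ℝ] X) (α : ℝ) (φ : X) : X :=
  (sin (α * π) / π) • ∫ l in Ioi 0, fractionalKernel α l • R l φ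

lemma tendsto_fractionalResolvent_apply
    (hRmem : ∀ l : ℝ, 0 < l → ∀ φ : X, R l φ ∈ D)
    (hAR : ∀ l : ℝ, 0 < l → ∀ φ : X, A (R l φ) + l • R l φ = φ)
    (hRA : ∀ l : ℝ, 0 < l → ∀ ψ ∈ D, R l (A ψ + l • ψ) = ψ)
    (hRnorm : ∀ l : ℝ, 0 < l → ∀ φ : X, ‖l • R l φ‖ ≤ M * ‖φ‖) (hM : 0 ≤ M) {ψ : X}
    (hψ : ψ ∈ D) :
    Tendsto (fun α => fractionalResolvent R α (A ψ)) (𝓝[>] (1 / 2))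
      (𝓝 (fractionalResolvent R (1 / 2) (A ψ))) := by
  have hsin : ContinuousAt (fun α : ℝ => sin (α * π) / π) (1 / 2) := by fun_prop
  exact (hsin.tendsto.mono_left nhdsWithin_le_nhds).smul
    (tendsto_integral_fractionalKernel_smul_resolvent_apply hRmem hAR hRA hRnorm hM hψ)

end FractionalResolvent

theorem resolvents_of_fractional_powers_converge_general
    {X : Type*} [NormedAddCommGroup X] [NormedSpace ℝ X]
    (D : Submodule ℝ X) (A : X → X)
    (M : ℝ) (hM : 1 ≤ M)
    (R : ℝ → X →L[ℝ] X)
    (hRmem : ∀ l : ℝ, 0 < l → ∀ φ : X, R l φ ∈ D)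
    (hAR : ∀ l : ℝ, 0 < l → ∀ φ : X, A (R l φ) + l • R l φ = φ)
    (hRA : ∀ l : ℝ, 0 < l → ∀ ψ ∈ D, R l (A ψ + l • ψ) = ψ)
    (hRnorm : ∀ l : ℝ, 0 < l → ∀ φ : X, ‖l • R l φ‖ ≤ M * ‖φ‖)
    (ψ : X) (hψ : ψ ∈ D) :
    (∀ α ∈ Set.Icc (1/2 : ℝ) (3/4), ∀ φ : X,
        IntegrableOn
          (fun l : ℝ =>
            (l ^ α / (l ^ (2 * α) + 2 * l ^ α * Real.cos (π * α) + 1)) • R l φ)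
          (Set.Ioi 0)) ∧
    ∀ ε > (0:ℝ), ∃ δ > (0:ℝ), ∀ α : ℝ, 1/2 < α → α < 1/2 + δ →
      ‖(Real.sin (α * π) / π) •
          (∫ l in Set.Ioi (0:ℝ),
            (l ^ α / (l ^ (2 * α) + 2 * l ^ α * Real.cos (π * α) + 1)) • R l (A ψ))
        - (Real.sin ((1/2 : ℝ) * π) / π) •
          (∫ l in Set.Ioi (0:ℝ),
            (l ^ (1/2 : ℝ) /
              (l ^ (2 * (1/2 : ℝ)) + 2 * l ^ (1/2 : ℝ) * Real.cos (π * (1/2 : ℝ)) + 1)) •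
              R l (A ψ))‖
        ≤ ε * (‖A ψ‖ + ‖ψ‖) := by
  refine ⟨fun α hα φ => integrableOn_fractionalKernel_smul_resolvent hRmem hAR hRA hRnorm
    (by linarith [hα.1]) hα.2 φ, fun ε hε => ?_⟩
  change ∃ δ > 0, ∀ α : ℝ, 1 / 2 < α → α < 1 / 2 + δ →
    ‖fractionalResolvent R α (A ψ) - fractionalResolvent R (1 / 2) (A ψ)‖ ≤ ε * (‖A ψ‖ + ‖ψ‖)
  obtain hC | hC := (add_nonneg (norm_nonneg (A ψ)) (norm_nonneg ψ)).eq_or_lt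
  · have hAψ : A ψ = 0 := norm_eq_zero.1 (by linarith [norm_nonneg (A ψ), norm_nonneg ψ])
    exact ⟨1, one_pos, fun α _ _ => by simp [fractionalResolvent, hAψ]; positivity⟩
  · obtain ⟨δ, hδ, hclose⟩ := Metric.tendsto_nhdsWithin_nhds.1
      (tendsto_fractionalResolvent_apply hRmem hAR hRA hRnorm (by linarith) hψ) _
      (mul_pos hε hC)
    refine ⟨δ, hδ, fun α h₁ h₂ => ?_⟩
    rw [← dist_eq_norm]
    refine (hclose h₁ ?_).le
    rw [Real.dist_eq, abs_of_pos (sub_pos.2 h₁)]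
    linarith

/-- **Convergence of the resolvents of fractional powers (Lemma 6.2, abstract form).**
In the resolvent setting, for `α ∈ [1/2, 3/4]` the Bochner integral
`B_α φ = (sin(απ)/π) ∫₀^∞ [λ^α/(λ^{2α} + 2λ^α cos(πα) + 1)] R(λ)φ dλ`
(the integral representation of `(I + A^α)^{-1}`) converges absolutely for every
`φ ∈ X`, and for `ψ ∈ D`, `φ := Aψ`, one has `‖B_α φ - B_{1/2} φ‖ → 0` as
`α → 1/2⁺`; quantitatively, for every `ε > 0` there is `δ > 0` such that
`1/2 < α < 1/2 + δ` implies `‖B_α φ - B_{1/2} φ‖ ≤ ε(‖φ‖ + ‖ψ‖)`. -/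
theorem resolvents_of_fractional_powers_converge
    {X : Type*} [NormedAddCommGroup X] [NormedSpace ℝ X] [CompleteSpace X]
    (D : Submodule ℝ X) (A : X → X)
    (hAlin : ∀ x ∈ D, ∀ y ∈ D, ∀ a b : ℝ, A (a • x + b • y) = a • A x + b • A y)
    (M : ℝ) (hM : 1 ≤ M)
    (R : ℝ → X →L[ℝ] X)
    (hRmem : ∀ l : ℝ, 0 < l → ∀ φ : X, R l φ ∈ D)
    (hAR : ∀ l : ℝ, 0 < l → ∀ φ : X, A (R l φ) + l • R l φ = φ)
    (hRA : ∀ l : ℝ, 0 < l → ∀ ψ ∈ D, R l (A ψ + l • ψ) = ψ)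
    (hRnorm : ∀ l : ℝ, 0 < l → ∀ φ : X, ‖l • R l φ‖ ≤ M * ‖φ‖)
    (ψ : X) (hψ : ψ ∈ D) :
    (∀ α ∈ Set.Icc (1/2 : ℝ) (3/4), ∀ φ : X,
        IntegrableOn
          (fun l : ℝ =>
            (l ^ α / (l ^ (2 * α) + 2 * l ^ α * Real.cos (π * α) + 1)) • R l φ)
          (Set.Ioi 0)) ∧
    ∀ ε > (0:ℝ), ∃ δ > (0:ℝ), ∀ α : ℝ, 1/2 < α → α < 1/2 + δ →
      ‖(Real.sin (α * π) / π) •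
          (∫ l in Set.Ioi (0:ℝ),
            (l ^ α / (l ^ (2 * α) + 2 * l ^ α * Real.cos (π * α) + 1)) • R l (A ψ))
        - (Real.sin ((1/2 : ℝ) * π) / π) •
          (∫ l in Set.Ioi (0:ℝ),
            (l ^ (1/2 : ℝ) /
              (l ^ (2 * (1/2 : ℝ)) + 2 * l ^ (1/2 : ℝ) * Real.cos (π * (1/2 : ℝ)) + 1)) •
              R l (A ψ))‖
        ≤ ε * (‖A ψ‖ + ‖ψ‖) :=
  resolvents_of_fractional_powers_converge_general D A M hM R hRmem hAR hRA hRnorm ψ hψ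
end

section
/- Strong convergence of A^{−β} to the identity as β → 0⁺ (Lemma 7.1 of the paper): in the positive-operator resolvent setting, for every φ ∈ X the Bochner integral defining A^{−β}φ converges for all β ∈ (0,1), and: (i) for every ε > 0 there exists L ≥ 1 such that for all β ∈ (0,1/2]: ‖φ − A^{−β}φ‖_X ≤ sin(πβ) ( 2L(1+M)/π + M/L ) ‖φ‖_X + ε; (ii) consequently ‖φ − A^{−β}φ‖_X → 0 as β → 0⁺. -/
/-!
The identity `∫₀^∞ λ^{-β} (1 + λ)⁻¹ dλ = π / sin(πβ)` (insert `(1 + λ)⁻¹ = ∫₀^∞ e^{-(1+λ)t} dt`,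
swap the integrals to get `Γ(1 - β) Γ(β)`, and use the reflection formula) turns `φ - A^{-β}φ` into
`(sin(πβ)/π) ∫₀^∞ λ^{-β} ((1 + λ)⁻¹φ - R(λ)φ) dλ`. On `(0, L]` the integrand is at most
`(1 + M)‖φ‖ λ^{-β}`, and `∫₀^L λ^{-β} dλ ≤ 2L` for `β ≤ 1/2`. On `(L, ∞)` write
`(1 + λ)⁻¹φ - R(λ)φ = (1 + λ)⁻¹((φ - λR(λ)φ) - R(λ)φ)` and choose `L` so that `‖φ - λR(λ)φ‖ ≤ ε`
for `λ ≥ L`: this holds because `λR(λ)ψ = ψ - R(λ)Aψ → ψ` on the dense domain and `‖λR(λ)‖ ≤ M`.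
Finally `sin(πβ) → 0` as `β → 0⁺`.
-/

open MeasureTheory Real Set Filter Topology

section Kernel

variable {β : ℝ}

lemma integral_Ioi_mul_exp_neg_one_add_mul (c : ℝ) {l : ℝ} (hl : 0 < l) :
    ∫ t in Ioi (0:ℝ), c * exp (-((1 + l) * t)) = c * (1 + l)⁻¹ := by
  rw [integral_const_mul]
  congr 1
  simpa using integral_rpow_mul_exp_neg_mul_Ioi one_pos (by linarith : 0 < 1 + l)

lemma integral_rpow_neg_mul_exp_neg_one_add_mul (hβ : β < 1) {t : ℝ} (ht : 0 < t) :
    ∫ l in Ioi (0:ℝ), l ^ (-β) * exp (-((1 + l) * t)) =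
      Gamma (1 - β) * (exp (-t) * t ^ (β - 1)) := by
  have hsplit : ∀ l : ℝ, l ^ (-β) * exp (-((1 + l) * t)) =
      exp (-t) * (l ^ ((1 - β) - 1) * exp (-(t * l))) := fun l => by
    rw [sub_sub_cancel_left, mul_left_comm, ← exp_add]; ring_nf
  simp_rw [hsplit]
  rw [integral_const_mul, integral_rpow_mul_exp_neg_mul_Ioi (by linarith) ht, one_div,
    inv_rpow ht.le, ← rpow_neg ht.le, neg_sub]
  ring

lemma integrable_rpow_neg_mul_exp_neg_one_add_mul (hβ0 : 0 < β) (hβ1 : β < 1) :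
    Integrable (Function.uncurry fun l t : ℝ => l ^ (-β) * exp (-((1 + l) * t)))
      ((volume.restrict (Ioi 0)).prod (volume.restrict (Ioi 0))) := by
  rw [integrable_prod_iff' (by fun_prop)]
  constructor
  · filter_upwards [ae_restrict_mem measurableSet_Ioi] with t ht
    have : IntegrableOn (fun l : ℝ => exp (-t) * (l ^ (-β) * exp (-t * l ^ (1:ℝ)))) (Ioi 0) :=
      (integrableOn_rpow_mul_exp_neg_mul_rpow (by linarith) one_pos ht).const_mul _
    refine this.congr_fun (fun l _ => ?_) measurableSet_Ioi
    simp only [Function.uncurry_apply_pair, rpow_one, mul_left_comm (exp (-t)), ← exp_add]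
    ring_nf
  · have : IntegrableOn (fun t : ℝ => Gamma (1 - β) * (exp (-t) * t ^ (β - 1))) (Ioi 0) :=
      (GammaIntegral_convergent hβ0).const_mul _
    refine this.congr_fun (fun t ht => ?_) measurableSet_Ioi
    dsimp only
    rw [← integral_rpow_neg_mul_exp_neg_one_add_mul hβ1 ht]
    refine setIntegral_congr_fun measurableSet_Ioi fun l hl => ?_
    simp only [Function.uncurry_apply_pair, Real.norm_eq_abs]
    exact (abs_of_nonneg (mul_nonneg (rpow_nonneg (le_of_lt hl) _) (exp_nonneg _))).symm

lemma integrableOn_rpow_neg_mul_inv_one_add (hβ0 : 0 < β) (hβ1 : β < 1) :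
    IntegrableOn (fun l : ℝ => l ^ (-β) * (1 + l)⁻¹) (Ioi 0) :=
  IntegrableOn.congr_fun
    (integrable_rpow_neg_mul_exp_neg_one_add_mul hβ0 hβ1).integral_prod_left
    (fun l hl => integral_Ioi_mul_exp_neg_one_add_mul (l ^ (-β)) hl) measurableSet_Ioi

lemma integral_rpow_neg_mul_inv_one_add (hβ0 : 0 < β) (hβ1 : β < 1) :
    ∫ l in Ioi (0:ℝ), l ^ (-β) * (1 + l)⁻¹ = π / sin (π * β) := by
  calc ∫ l in Ioi (0:ℝ), l ^ (-β) * (1 + l)⁻¹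
      = ∫ l in Ioi (0:ℝ), ∫ t in Ioi (0:ℝ), l ^ (-β) * exp (-((1 + l) * t)) :=
        setIntegral_congr_fun measurableSet_Ioi
          fun _ hl => (integral_Ioi_mul_exp_neg_one_add_mul _ hl).symm
    _ = ∫ t in Ioi (0:ℝ), ∫ l in Ioi (0:ℝ), l ^ (-β) * exp (-((1 + l) * t)) :=
        integral_integral_swap (integrable_rpow_neg_mul_exp_neg_one_add_mul hβ0 hβ1)
    _ = ∫ t in Ioi (0:ℝ), Gamma (1 - β) * (exp (-t) * t ^ (β - 1)) :=
        setIntegral_congr_fun measurableSet_Ioi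
          fun _ ht => integral_rpow_neg_mul_exp_neg_one_add_mul hβ1 ht
    _ = π / sin (π * β) := by
        rw [integral_const_mul, ← Gamma_eq_integral hβ0, mul_comm, Gamma_mul_Gamma_one_sub]

lemma integral_Ioc_zero_rpow_neg_le {L : ℝ} (hβ0 : 0 ≤ β) (hβ : β ≤ 1 / 2) (hL : 1 ≤ L) :
    ∫ l in Ioc 0 L, l ^ (-β) ≤ 2 * L := by
  have hβ1 : 0 < -β + 1 := by linarith
  rw [← intervalIntegral.integral_of_le (by linarith), integral_rpow (Or.inl (by linarith)),
    zero_rpow hβ1.ne', sub_zero, div_le_iff₀ hβ1]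
  calc L ^ (-β + 1) ≤ L ^ (1:ℝ) := rpow_le_rpow_of_exponent_le hL (by linarith)
    _ ≤ 2 * L * (-β + 1) := by rw [rpow_one]; nlinarith

end Kernel

lemma tendsto_apply_of_eventually_opNorm_le_of_dense {ι E F : Type*}
    [NormedAddCommGroup E] [NormedSpace ℝ E] [NormedAddCommGroup F] [NormedSpace ℝ F]
    {T : ι → E →L[ℝ] F} {T₀ : E →L[ℝ] F} {l : Filter ι} {C : ℝ} {S : Set E}
    (hC : ∀ᶠ i in l, ‖T i‖ ≤ C) (hS : Dense S)
    (hST : ∀ ψ ∈ S, Tendsto (fun i => T i ψ) l (𝓝 (T₀ ψ))) (φ : E) :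
    Tendsto (fun i => T i φ) l (𝓝 (T₀ φ)) := by
  rw [Metric.tendsto_nhds]
  intro ε hε
  have hU : IsOpen {ψ | (C + ‖T₀‖) * ‖φ - ψ‖ < ε / 2} :=
    isOpen_lt (by fun_prop) continuous_const
  obtain ⟨ψ, hψS, hψ⟩ := hS.exists_mem_open hU ⟨φ, by simpa using half_pos hε⟩
  filter_upwards [hC, Metric.tendsto_nhds.1 (hST ψ hψS) (ε / 2) (half_pos hε)] with i hi hiψ
  have hsplit : T i φ - T₀ φ = T i (φ - ψ) + (T i ψ - T₀ ψ) - T₀ (φ - ψ) := by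
    simp only [map_sub]; abel
  calc dist (T i φ) (T₀ φ)
      ≤ ‖T i (φ - ψ)‖ + dist (T i ψ) (T₀ ψ) + ‖T₀ (φ - ψ)‖ := by
        rw [dist_eq_norm, dist_eq_norm, hsplit]
        exact (norm_sub_le _ _).trans (add_le_add_left (norm_add_le _ _) _)
    _ ≤ C * ‖φ - ψ‖ + dist (T i ψ) (T₀ ψ) + ‖T₀‖ * ‖φ - ψ‖ := by
        gcongr
        · exact (T i).le_of_opNorm_le hi _
        · exact T₀.le_opNorm _
    _ < ε := by simp only [Set.mem_ofPred_eq] at hψ; linarith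

lemma tendsto_zero_of_forall_le_mul_add {ι : Type*} {l : Filter ι} {F u : ι → ℝ}
    (hF : ∀ i, 0 ≤ F i) (hu : Tendsto u l (𝓝 0))
    (h : ∀ ε > 0, ∃ C, ∀ᶠ i in l, F i ≤ u i * C + ε) : Tendsto F l (𝓝 0) := by
  refine tendsto_order.2 ⟨fun a ha => Eventually.of_forall fun i => ha.trans_le (hF i),
    fun a ha => ?_⟩
  obtain ⟨C, hC⟩ := h (a / 2) (half_pos ha)
  have huC : ∀ᶠ i in l, u i * C < a / 2 :=
    (tendsto_order.1 (by simpa using hu.mul_const C)).2 _ (half_pos ha)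
  filter_upwards [hC, huC] with i hi hui
  linarith

section Resolvent

variable {X : Type*} [NormedAddCommGroup X] [NormedSpace ℝ X]

lemma resolvent_apply_sub_eq_smul {A : X → X} {D : Set X} {T : X →L[ℝ] X} {l m : ℝ}
    {φ ψ : X} (hT : ∀ x ∈ D, T (A x + l • x) = x) (hψ : ψ ∈ D) (hAψ : A ψ + m • ψ = φ) :
    T φ - ψ = (m - l) • T ψ := by
  have h := hT ψ hψ
  rw [show A ψ + l • ψ = φ + (l - m) • ψ by rw [← hAψ]; module, map_add, map_smul] at h
  conv_lhs => rw [← h]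
  module

variable {R : ℝ → X →L[ℝ] X} {M : ℝ} {β : ℝ}

lemma norm_resolvent_apply_le_s13 (hM : 0 ≤ M)
    (hR : ∀ l : ℝ, 0 < l → ∀ φ : X, ‖R l φ‖ ≤ (M / (1 + l)) * ‖φ‖) {l : ℝ} (hl : 0 < l)
    (φ : X) : ‖R l φ‖ ≤ M * ‖φ‖ :=
  (hR l hl φ).trans (by gcongr; exact div_le_self hM (by linarith))

lemma continuousOn_resolvent_apply {A : X → X} {D : Set X} (hM : 0 ≤ M)
    (hRmem : ∀ l : ℝ, 0 < l → ∀ φ : X, R l φ ∈ D)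
    (hAR : ∀ l : ℝ, 0 < l → ∀ φ : X, A (R l φ) + l • R l φ = φ)
    (hRA : ∀ l : ℝ, 0 < l → ∀ ψ ∈ D, R l (A ψ + l • ψ) = ψ)
    (hR : ∀ l : ℝ, 0 < l → ∀ φ : X, ‖R l φ‖ ≤ (M / (1 + l)) * ‖φ‖) (φ : X) :
    ContinuousOn (fun l => R l φ) (Ioi 0) := by
  refine (LipschitzOnWith.of_dist_le' (K := M * (M * ‖φ‖)) fun l hl m hm => ?_).continuousOn
  rw [dist_eq_norm, resolvent_apply_sub_eq_smul (hRA l hl) (hRmem m hm φ) (hAR m hm φ),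
    norm_smul, Real.norm_eq_abs, abs_sub_comm, ← Real.dist_eq, mul_comm]
  gcongr
  exact (norm_resolvent_apply_le_s13 hM hR hl _).trans
    (mul_le_mul_of_nonneg_left (norm_resolvent_apply_le_s13 hM hR hm φ) hM)

lemma tendsto_resolvent_apply_atTop
    (hR : ∀ l : ℝ, 0 < l → ∀ φ : X, ‖R l φ‖ ≤ (M / (1 + l)) * ‖φ‖) (φ : X) :
    Tendsto (fun l => R l φ) atTop (𝓝 0) := by
  have hlim : Tendsto (fun l : ℝ => M / (1 + l) * ‖φ‖) atTop (𝓝 0) := by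
    simpa using (tendsto_const_nhds.div_atTop
      (tendsto_atTop_add_const_left _ 1 tendsto_id)).mul_const ‖φ‖
  exact squeeze_zero_norm' ((eventually_gt_atTop 0).mono fun l hl => hR l hl φ) hlim

lemma tendsto_smul_resolvent_apply_atTop {A : X → X} {D : Set X} (hM : 0 ≤ M) (hD : Dense D)
    (hRA : ∀ l : ℝ, 0 < l → ∀ ψ ∈ D, R l (A ψ + l • ψ) = ψ)
    (hRnorm : ∀ l : ℝ, 0 < l → ∀ φ : X, ‖l • R l φ‖ ≤ M * ‖φ‖)
    (hR : ∀ l : ℝ, 0 < l → ∀ φ : X, ‖R l φ‖ ≤ (M / (1 + l)) * ‖φ‖) (φ : X) :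
    Tendsto (fun l => l • R l φ) atTop (𝓝 φ) := by
  refine tendsto_apply_of_eventually_opNorm_le_of_dense (T := fun l => l • R l)
    (T₀ := ContinuousLinearMap.id ℝ X) (C := M) ?_ hD (fun ψ hψ => ?_) φ
  · filter_upwards [eventually_gt_atTop 0] with l hl
    exact ContinuousLinearMap.opNorm_le_bound _ hM (hRnorm l hl)
  · have hψ : ∀ᶠ l in atTop, ψ - R l (A ψ) = l • R l ψ := by
      filter_upwards [eventually_gt_atTop 0] with l hl
      rw [sub_eq_iff_eq_add', ← map_smul, ← map_add, hRA l hl ψ hψ]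
    simpa using (tendsto_const_nhds.sub (tendsto_resolvent_apply_atTop hR (A ψ))).congr' hψ

lemma integrableOn_rpow_neg_smul_of_norm_le {f : ℝ → X} {C : ℝ} (hβ0 : 0 < β)
    (hβ1 : β < 1) (hf : ContinuousOn f (Ioi 0)) (hfC : ∀ l ∈ Ioi (0:ℝ), ‖f l‖ ≤ C * (1 + l)⁻¹) :
    IntegrableOn (fun l => l ^ (-β) • f l) (Ioi 0) := by
  have hmeas : ContinuousOn (fun l => l ^ (-β) • f l) (Ioi 0) :=
    (continuousOn_id.rpow_const fun l hl => Or.inl (ne_of_gt hl)).smul hf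
  refine ((integrableOn_rpow_neg_mul_inv_one_add hβ0 hβ1).const_mul C).mono'
    (hmeas.aestronglyMeasurable measurableSet_Ioi) ?_
  filter_upwards [ae_restrict_mem measurableSet_Ioi] with l hl
  rw [norm_smul, norm_of_nonneg (rpow_nonneg (le_of_lt hl) _), mul_left_comm]
  exact mul_le_mul_of_nonneg_left (hfC l hl) (rpow_nonneg (le_of_lt hl) _)

lemma sub_smul_integral_rpow_neg_smul_eq [CompleteSpace X] {f : ℝ → X} (hβ0 : 0 < β)
    (hβ1 : β < 1) (hf : IntegrableOn (fun l => l ^ (-β) • f l) (Ioi 0)) (φ : X) :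
    φ - (sin (π * β) / π) • ∫ l in Ioi (0:ℝ), l ^ (-β) • f l =
      (sin (π * β) / π) • ∫ l in Ioi (0:ℝ), l ^ (-β) • ((1 + l)⁻¹ • φ - f l) := by
  have hs : sin (π * β) ≠ 0 :=
    (sin_pos_of_pos_of_lt_pi (by positivity) (by nlinarith [pi_pos])).ne'
  have hg := integrableOn_rpow_neg_mul_inv_one_add hβ0 hβ1
  simp_rw [smul_sub, smul_smul]
  rw [integral_sub (hg.smul_const φ) hf, integral_smul_const,
    integral_rpow_neg_mul_inv_one_add hβ0 hβ1, smul_sub, smul_smul,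
    show sin (π * β) / π * (π / sin (π * β)) = 1 by field_simp, one_smul]

lemma norm_integral_Ioc_rpow_neg_smul_le {h : ℝ → X} {L C : ℝ} (hβ0 : 0 ≤ β)
    (hβ : β ≤ 1 / 2) (hL : 1 ≤ L) (hh : ∀ l ∈ Ioc 0 L, ‖h l‖ ≤ C) :
    ‖∫ l in Ioc 0 L, l ^ (-β) • h l‖ ≤ 2 * L * C := by
  have hC : 0 ≤ C := (norm_nonneg _).trans (hh L ⟨by linarith, le_rfl⟩)
  have hint : IntegrableOn (fun l : ℝ => l ^ (-β)) (Ioc 0 L) :=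
    (intervalIntegrable_iff_integrableOn_Ioc_of_le (by linarith)).1
      (intervalIntegral.intervalIntegrable_rpow' (by linarith))
  have hpt : ∀ᵐ l ∂volume.restrict (Ioc 0 L), ‖l ^ (-β) • h l‖ ≤ C * l ^ (-β) := by
    filter_upwards [ae_restrict_mem measurableSet_Ioc] with l hl
    rw [norm_smul, norm_of_nonneg (rpow_nonneg hl.1.le _), mul_comm]
    exact mul_le_mul_of_nonneg_right (hh l hl) (rpow_nonneg hl.1.le _)
  calc ‖∫ l in Ioc 0 L, l ^ (-β) • h l‖ ≤ ∫ l in Ioc 0 L, C * l ^ (-β) :=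
        norm_integral_le_of_norm_le (hint.const_mul C) hpt
    _ = C * ∫ l in Ioc 0 L, l ^ (-β) := integral_const_mul _ _
    _ ≤ C * (2 * L) := by gcongr; exact integral_Ioc_zero_rpow_neg_le hβ0 hβ hL
    _ = 2 * L * C := by ring

lemma norm_integral_Ioi_rpow_neg_smul_le {h : ℝ → X} {L ε K : ℝ} (hβ0 : 0 < β)
    (hβ1 : β < 1) (hL : 1 ≤ L) (hε : 0 ≤ ε) (hK : 0 ≤ K)
    (hh : ∀ l, L < l → ‖h l‖ ≤ (1 + l)⁻¹ * (ε + K / (1 + l))) :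
    ‖∫ l in Ioi L, l ^ (-β) • h l‖ ≤ ε * (π / sin (π * β)) + K / L := by
  have hL0 : 0 < L := by linarith
  have hg := integrableOn_rpow_neg_mul_inv_one_add hβ0 hβ1
  have hgL := hg.mono_set (Ioi_subset_Ioi hL0.le)
  have hp : IntegrableOn (fun l : ℝ => l ^ (-2:ℝ)) (Ioi L) :=
    integrableOn_Ioi_rpow_of_lt (by norm_num) hL0
  have hpt : ∀ᵐ l ∂volume.restrict (Ioi L),
      ‖l ^ (-β) • h l‖ ≤ ε * (l ^ (-β) * (1 + l)⁻¹) + K * l ^ (-2:ℝ) := by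
    filter_upwards [ae_restrict_mem measurableSet_Ioi] with l (hl : L < l)
    have hl0 : 0 < l := by linarith
    have hβl : l ^ (-β) ≤ 1 := rpow_le_one_of_one_le_of_nonpos (by linarith) (by linarith)
    have hsq : (1 + l)⁻¹ * (1 + l)⁻¹ ≤ l ^ (-2:ℝ) := by
      rw [rpow_neg hl0.le, rpow_two, ← mul_inv, ← sq]
      exact inv_anti₀ (pow_pos hl0 2) (pow_le_pow_left₀ hl0.le (by linarith) 2)
    rw [norm_smul, norm_of_nonneg (rpow_nonneg hl0.le _)]
    calc l ^ (-β) * ‖h l‖ ≤ l ^ (-β) * ((1 + l)⁻¹ * (ε + K / (1 + l))) :=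
          mul_le_mul_of_nonneg_left (hh l hl) (rpow_nonneg hl0.le _)
      _ = ε * (l ^ (-β) * (1 + l)⁻¹) + K * (l ^ (-β) * ((1 + l)⁻¹ * (1 + l)⁻¹)) := by
          ring
      _ ≤ ε * (l ^ (-β) * (1 + l)⁻¹) + K * (1 * l ^ (-2:ℝ)) := by gcongr
      _ = ε * (l ^ (-β) * (1 + l)⁻¹) + K * l ^ (-2:ℝ) := by rw [one_mul]
  have hgmono : ∫ l in Ioi L, l ^ (-β) * (1 + l)⁻¹ ≤ π / sin (π * β) := by
    rw [← integral_rpow_neg_mul_inv_one_add hβ0 hβ1]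
    refine setIntegral_mono_set hg ?_ (Ioi_subset_Ioi hL0.le).eventuallyLE
    filter_upwards [ae_restrict_mem measurableSet_Ioi] with l (hl : 0 < l)
    exact mul_nonneg (rpow_nonneg hl.le _) (inv_nonneg.2 (by linarith))
  calc ‖∫ l in Ioi L, l ^ (-β) • h l‖
      ≤ ∫ l in Ioi L, (ε * (l ^ (-β) * (1 + l)⁻¹) + K * l ^ (-2:ℝ)) :=
        norm_integral_le_of_norm_le ((hgL.const_mul ε).add (hp.const_mul K)) hpt
    _ = ε * (∫ l in Ioi L, l ^ (-β) * (1 + l)⁻¹) + K / L := by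
        rw [integral_add (hgL.const_mul ε) (hp.const_mul K), integral_const_mul,
          integral_const_mul, integral_Ioi_rpow_of_lt (by norm_num) hL0,
          show (-2:ℝ) + 1 = -1 by norm_num, rpow_neg_one]
        ring
    _ ≤ ε * (π / sin (π * β)) + K / L := by gcongr

lemma norm_integral_Ioi_zero_rpow_neg_smul_le {h : ℝ → X} {L C ε K : ℝ} (hβ0 : 0 < β)
    (hβ : β ≤ 1 / 2) (hL : 1 ≤ L) (hε : 0 ≤ ε) (hK : 0 ≤ K)
    (hint : IntegrableOn (fun l => l ^ (-β) • h l) (Ioi 0))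
    (hhead : ∀ l ∈ Ioc 0 L, ‖h l‖ ≤ C)
    (htail : ∀ l, L < l → ‖h l‖ ≤ (1 + l)⁻¹ * (ε + K / (1 + l))) :
    ‖∫ l in Ioi (0:ℝ), l ^ (-β) • h l‖ ≤ 2 * L * C + (ε * (π / sin (π * β)) + K / L) := by
  have hL0 : 0 < L := by linarith
  rw [← Ioc_union_Ioi_eq_Ioi hL0.le, setIntegral_union (Ioc_disjoint_Ioi le_rfl)
    measurableSet_Ioi (hint.mono_set Ioc_subset_Ioi_self)
    (hint.mono_set (Ioi_subset_Ioi hL0.le))]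
  exact (norm_add_le _ _).trans (add_le_add
    (norm_integral_Ioc_rpow_neg_smul_le hβ0.le hβ hL hhead)
    (norm_integral_Ioi_rpow_neg_smul_le hβ0 (by linarith) hL hε hK htail))

lemma norm_inv_one_add_smul_sub_resolvent_apply_le (hM : 0 ≤ M)
    (hR : ∀ l : ℝ, 0 < l → ∀ φ : X, ‖R l φ‖ ≤ (M / (1 + l)) * ‖φ‖) {l : ℝ} (hl : 0 < l)
    (φ : X) : ‖(1 + l)⁻¹ • φ - R l φ‖ ≤ (1 + M) * ‖φ‖ := by
  have h1 : ‖(1 + l)⁻¹ • φ‖ ≤ ‖φ‖ := by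
    rw [norm_smul, norm_inv, norm_of_nonneg (by linarith)]
    exact mul_le_of_le_one_left (norm_nonneg _) (inv_le_one_of_one_le₀ (by linarith))
  linarith [norm_sub_le ((1 + l)⁻¹ • φ) (R l φ), norm_resolvent_apply_le_s13 hM hR hl φ]

lemma norm_inv_one_add_smul_sub_resolvent_apply_le_inv_mul
    (hR : ∀ l : ℝ, 0 < l → ∀ φ : X, ‖R l φ‖ ≤ (M / (1 + l)) * ‖φ‖) {l : ℝ} (hl : 0 < l)
    (φ : X) :
    ‖(1 + l)⁻¹ • φ - R l φ‖ ≤ (1 + l)⁻¹ * (‖φ - l • R l φ‖ + M * ‖φ‖ / (1 + l)) := by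
  have h1l : 1 + l ≠ 0 := by positivity
  have hsplit : (1 + l)⁻¹ • φ - R l φ = (1 + l)⁻¹ • ((φ - l • R l φ) - R l φ) := by
    rw [smul_sub, smul_sub, smul_smul, sub_sub, ← add_smul,
      show (1 + l)⁻¹ * l + (1 + l)⁻¹ = 1 by field_simp; ring, one_smul]
  rw [hsplit, norm_smul, norm_inv, norm_of_nonneg (by linarith), mul_div_right_comm]
  gcongr
  exact (norm_sub_le _ _).trans (add_le_add le_rfl (hR l hl φ))

lemma norm_sub_smul_integral_rpow_neg_smul_resolvent_le [CompleteSpace X] (hM : 0 ≤ M)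
    (hR : ∀ l : ℝ, 0 < l → ∀ φ : X, ‖R l φ‖ ≤ (M / (1 + l)) * ‖φ‖) {φ : X} {L ε : ℝ}
    (hβ0 : 0 < β) (hβ : β ≤ 1 / 2) (hL : 1 ≤ L) (hε : 0 ≤ ε)
    (hLε : ∀ l, L ≤ l → ‖φ - l • R l φ‖ ≤ ε)
    (hint : IntegrableOn (fun l => l ^ (-β) • R l φ) (Ioi 0)) :
    ‖φ - (sin (π * β) / π) • ∫ l in Ioi (0:ℝ), l ^ (-β) • R l φ‖ ≤
      sin (π * β) * (2 * L * (1 + M) / π + M / L) * ‖φ‖ + ε := by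
  have hβ1 : β < 1 := by linarith
  have hs : 0 < sin (π * β) := sin_pos_of_pos_of_lt_pi (by positivity) (by nlinarith [pi_pos])
  have hhint : IntegrableOn (fun l => l ^ (-β) • ((1 + l)⁻¹ • φ - R l φ)) (Ioi 0) := by
    refine IntegrableOn.congr_fun
      (((integrableOn_rpow_neg_mul_inv_one_add hβ0 hβ1).smul_const φ).sub hint)
      (fun l _ => ?_) measurableSet_Ioi
    simp only [Pi.sub_apply, smul_sub, smul_smul]
  have htail : ∀ l, L < l →
      ‖(1 + l)⁻¹ • φ - R l φ‖ ≤ (1 + l)⁻¹ * (ε + M * ‖φ‖ / (1 + l)) := fun l hl =>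
    (norm_inv_one_add_smul_sub_resolvent_apply_le_inv_mul hR (by linarith) φ).trans <| by
      gcongr
      · exact inv_nonneg.2 (by linarith)
      · exact hLε l hl.le
  rw [sub_smul_integral_rpow_neg_smul_eq hβ0 hβ1 hint, norm_smul,
    norm_of_nonneg (by positivity)]
  have hπ : 1 ≤ π := by linarith [pi_gt_three]
  calc sin (π * β) / π * ‖∫ l in Ioi (0:ℝ), l ^ (-β) • ((1 + l)⁻¹ • φ - R l φ)‖
      ≤ sin (π * β) / π *
          (2 * L * ((1 + M) * ‖φ‖) + (ε * (π / sin (π * β)) + M * ‖φ‖ / L)) := by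
        gcongr
        exact norm_integral_Ioi_zero_rpow_neg_smul_le hβ0 hβ hL hε (by positivity) hhint
          (fun l hl => norm_inv_one_add_smul_sub_resolvent_apply_le hM hR hl.1 φ) htail
    _ ≤ sin (π * β) * (2 * L * (1 + M) / π + M / L) * ‖φ‖ + ε := by
        have hsε : sin (π * β) / π * (ε * (π / sin (π * β))) = ε := by field_simp
        have hdiv : sin (π * β) / π * (M * ‖φ‖ / L) ≤ sin (π * β) * (M * ‖φ‖ / L) :=
          mul_le_mul_of_nonneg_right (div_le_self hs.le hπ) (by positivity)
        rw [mul_add, mul_add, hsε]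
        linarith [show sin (π * β) / π * (2 * L * ((1 + M) * ‖φ‖)) =
          sin (π * β) * (2 * L * (1 + M) / π) * ‖φ‖ by ring,
          show sin (π * β) * (M * ‖φ‖ / L) = sin (π * β) * (M / L) * ‖φ‖ by ring]

end Resolvent

theorem negative_powers_tend_to_identity_general
    {X : Type*} [NormedAddCommGroup X] [NormedSpace ℝ X] [CompleteSpace X]
    (D : Submodule ℝ X) (hD : Dense (D : Set X)) (A : X → X)
    (M : ℝ) (hM : 1 ≤ M)
    (R : ℝ → X →L[ℝ] X)
    (hRmem : ∀ l : ℝ, 0 < l → ∀ φ : X, R l φ ∈ D)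
    (hAR : ∀ l : ℝ, 0 < l → ∀ φ : X, A (R l φ) + l • R l φ = φ)
    (hRA : ∀ l : ℝ, 0 < l → ∀ ψ ∈ D, R l (A ψ + l • ψ) = ψ)
    (hRnorm : ∀ l : ℝ, 0 < l → ∀ φ : X, ‖l • R l φ‖ ≤ M * ‖φ‖)
    (hRnorm' : ∀ l : ℝ, 0 < l → ∀ φ : X, ‖R l φ‖ ≤ (M / (1 + l)) * ‖φ‖)
    (φ : X) :
    (∀ β ∈ Set.Ioo (0:ℝ) 1,
        IntegrableOn (fun l : ℝ => l ^ (-β) • R l φ) (Set.Ioi 0)) ∧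
    (∀ ε > (0:ℝ), ∃ L : ℝ, 1 ≤ L ∧ ∀ β ∈ Set.Ioc (0:ℝ) (1/2),
        ‖φ - (Real.sin (π * β) / π) • (∫ l in Set.Ioi (0:ℝ), l ^ (-β) • R l φ)‖ ≤
          Real.sin (π * β) * (2 * L * (1 + M) / π + M / L) * ‖φ‖ + ε) ∧
    Tendsto
      (fun β : ℝ => ‖φ - (Real.sin (π * β) / π) • (∫ l in Set.Ioi (0:ℝ), l ^ (-β) • R l φ)‖)
      (nhdsWithin 0 (Set.Ioi 0)) (nhds 0) := by
  have hM0 : 0 ≤ M := zero_le_one.trans hM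
  have hint : ∀ β ∈ Ioo (0:ℝ) 1, IntegrableOn (fun l : ℝ => l ^ (-β) • R l φ) (Ioi 0) :=
    fun β hβ => integrableOn_rpow_neg_smul_of_norm_le (C := M * ‖φ‖) hβ.1 hβ.2
      (continuousOn_resolvent_apply hM0 hRmem hAR hRA hRnorm' φ)
      fun l hl => (hRnorm' l hl φ).trans_eq (by ring)
  have hbound : ∀ ε > (0:ℝ), ∃ L : ℝ, 1 ≤ L ∧ ∀ β ∈ Ioc (0:ℝ) (1/2),
      ‖φ - (sin (π * β) / π) • (∫ l in Ioi (0:ℝ), l ^ (-β) • R l φ)‖ ≤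
        sin (π * β) * (2 * L * (1 + M) / π + M / L) * ‖φ‖ + ε := by
    intro ε hε
    obtain ⟨L₀, hL₀⟩ := Metric.tendsto_atTop.1
      (tendsto_smul_resolvent_apply_atTop hM0 hD hRA hRnorm hRnorm' φ) ε hε
    refine ⟨max L₀ 1, le_max_right _ _, fun β hβ => ?_⟩
    refine norm_sub_smul_integral_rpow_neg_smul_resolvent_le hM0 hRnorm' hβ.1 hβ.2
      (le_max_right _ _) hε.le (fun l hl => ?_) (hint β ⟨hβ.1, by linarith [hβ.2]⟩)
    rw [← dist_eq_norm']
    exact (hL₀ l ((le_max_left _ _).trans hl)).le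
  have hsin : Tendsto (fun β : ℝ => sin (π * β)) (𝓝[>] 0) (𝓝 0) :=
    ((by fun_prop : Continuous fun β : ℝ => sin (π * β)).tendsto' 0 0 (by simp)).mono_left
      nhdsWithin_le_nhds
  refine ⟨hint, hbound, tendsto_zero_of_forall_le_mul_add (fun _ => norm_nonneg _) hsin
    fun ε hε => ?_⟩
  obtain ⟨L, -, hL⟩ := hbound ε hε
  refine ⟨(2 * L * (1 + M) / π + M / L) * ‖φ‖, ?_⟩
  filter_upwards [Ioc_mem_nhdsGT (by norm_num : (0:ℝ) < 1 / 2)] with β hβ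
  rw [← mul_assoc]
  exact hL β hβ

/-- **Strong convergence of `A^{-β}` to the identity as `β → 0⁺` (Lemma 7.1).**
Positive-operator resolvent setting: `D` dense, and the resolvents satisfy both
`‖λR(λ)‖ ≤ M` and `‖R(λ)‖ ≤ M/(1+λ)`. Then for every `φ ∈ X` the Bochner integral
defining the Balakrishnan power `A^{-β}φ = (sin(πβ)/π)∫₀^∞ λ^{-β} R(λ)φ dλ` converges
for all `β ∈ (0,1)`; (i) for every `ε > 0` there is `L ≥ 1` with
`‖φ - A^{-β}φ‖ ≤ sin(πβ)(2L(1+M)/π + M/L)‖φ‖ + ε` for all `β ∈ (0,1/2]`;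
(ii) consequently `‖φ - A^{-β}φ‖ → 0` as `β → 0⁺`. -/
theorem negative_powers_tend_to_identity
    {X : Type*} [NormedAddCommGroup X] [NormedSpace ℝ X] [CompleteSpace X]
    (D : Submodule ℝ X) (hD : Dense (D : Set X)) (A : X → X)
    (hAlin : ∀ x ∈ D, ∀ y ∈ D, ∀ a b : ℝ, A (a • x + b • y) = a • A x + b • A y)
    (M : ℝ) (hM : 1 ≤ M)
    (R : ℝ → X →L[ℝ] X)
    (hRmem : ∀ l : ℝ, 0 < l → ∀ φ : X, R l φ ∈ D)
    (hAR : ∀ l : ℝ, 0 < l → ∀ φ : X, A (R l φ) + l • R l φ = φ)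
    (hRA : ∀ l : ℝ, 0 < l → ∀ ψ ∈ D, R l (A ψ + l • ψ) = ψ)
    (hRnorm : ∀ l : ℝ, 0 < l → ∀ φ : X, ‖l • R l φ‖ ≤ M * ‖φ‖)
    (hRnorm' : ∀ l : ℝ, 0 < l → ∀ φ : X, ‖R l φ‖ ≤ (M / (1 + l)) * ‖φ‖)
    (φ : X) :
    (∀ β ∈ Set.Ioo (0:ℝ) 1,
        IntegrableOn (fun l : ℝ => l ^ (-β) • R l φ) (Set.Ioi 0)) ∧
    (∀ ε > (0:ℝ), ∃ L : ℝ, 1 ≤ L ∧ ∀ β ∈ Set.Ioc (0:ℝ) (1/2),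
        ‖φ - (Real.sin (π * β) / π) • (∫ l in Set.Ioi (0:ℝ), l ^ (-β) • R l φ)‖ ≤
          Real.sin (π * β) * (2 * L * (1 + M) / π + M / L) * ‖φ‖ + ε) ∧
    Tendsto
      (fun β : ℝ => ‖φ - (Real.sin (π * β) / π) • (∫ l in Set.Ioi (0:ℝ), l ^ (-β) • R l φ)‖)
      (nhdsWithin 0 (Set.Ioi 0)) (nhds 0) :=
  negative_powers_tend_to_identity_general D hD A M hM R hRmem hAR hRA hRnorm hRnorm' φ
end
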